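/- arXiv:1811.08505 — 6 statements merged into one kernel-verified Lean document; each statement's English description precedes it below -/
import Mathlib

section
/- For every d ≥ 3, every 0 ≤ j ≤ d and every 1 ≤ k ≤ d, the antipodal map satisfies α(τ_j^k) = τ_{d−j}^{k+j} (indices mod d); consequently α(Γ_j) = Γ_{d−j} for all 0 ≤ j ≤ d. Moreover: if d = 2m+1 is odd then α maps Γ_m ∪ Γ_{m+1} onto itself; and if d = 2m is even then α maps γ (the complex generated by {τ_{m−1}^k : 1 ≤ k ≤ m}) onto −γ (the complex generated by {τ_{m+1}^k : m ≤ k ≤ d−1}) and maps Γ_m ∪ γ ∪ (−γ) onto itself, so in both cases this complex is centrally symmetric. -/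
namespace SpherePaper

/-- Vertices of `∂C_d^*`: `(i, false)` plays the role of `x_i` and `(i, true)` of `y_i`,
with the cyclic index convention `x_{d+k} = x_k` built in via `ZMod d`. -/
abbrev Vtx (d : ℕ) := ZMod d × Bool

/-- The vertex `x_k`. -/
def xv (d k : ℕ) : Vtx d := ((k : ZMod d), false)

/-- The vertex `y_k`. -/
def yv (d k : ℕ) : Vtx d := ((k : ZMod d), true)

/-- The antipodal map `α`, sending `x_k ↦ y_k` and `y_k ↦ x_k`. -/
def alphaV (d : ℕ) (v : Vtx d) : Vtx d := (v.1, !v.2)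

/-- The facet `τ_j^k = {y_k, …, y_{k+j-1}} ∪ {x_{k+j}, …, x_{k+d-1}}` of `∂C_d^*`. -/
def tau (d j k : ℕ) : Finset (Vtx d) :=
  (Finset.range d).image fun t => (((k + t : ℕ) : ZMod d), decide (t < j))

/-- The complex `Γ_j` generated by the facets `τ_j^k`, `1 ≤ k ≤ d`. -/
def Gamma (d j : ℕ) : Set (Finset (Vtx d)) :=
  {F | ∃ k, 1 ≤ k ∧ k ≤ d ∧ F ⊆ tau d j k}

/-- The `n`-th facet `σ_n` of `B(1,d)` (indices read periodically mod `2d`):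
`σ_i = {x_1,…,x_i, y_{i+1},…,y_d}` and `σ_{d+i} = {y_1,…,y_i, x_{i+1},…,x_d}`
for `1 ≤ i ≤ d`. -/
def sigB (d n : ℕ) : Finset (Vtx d) :=
  if (n - 1) % (2 * d) + 1 ≤ d then
    (Finset.range d).image fun t =>
      (((t + 1 : ℕ) : ZMod d), decide ((n - 1) % (2 * d) + 1 < t + 1))
  else
    (Finset.range d).image fun t =>
      (((t + 1 : ℕ) : ZMod d), decide (t + 1 ≤ (n - 1) % (2 * d) + 1 - d))

/-- `F` is a facet (an inclusion-maximal face) of the complex `C`. -/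
def IsFacetOf {α : Type*} (C : Set (Finset α)) (F : Finset α) : Prop :=
  F ∈ C ∧ ∀ G ∈ C, F ⊆ G → F = G

lemma alpha_invol (d : ℕ) (F : Finset (Vtx d)) :
    (F.image (alphaV d)).image (alphaV d) = F := by
  ext v
  simp only [Finset.mem_image]
  constructor
  · rintro ⟨_, ⟨w, hw, rfl⟩, rfl⟩
    simpa [alphaV] using hw
  · intro hv
    exact ⟨alphaV d v, ⟨v, hv, rfl⟩, by simp [alphaV]⟩

lemma tau_congr (d j a b : ℕ) (h : (a : ZMod d) = (b : ZMod d)) :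
    tau d j a = tau d j b := by
  unfold tau
  apply Finset.image_congr
  intro t _
  simp only
  congr 1
  push_cast
  rw [h]

lemma tau_congr' (d j a b : ℕ) (h : a = b + d) : tau d j a = tau d j b := by
  apply tau_congr
  rw [h]
  push_cast
  simp [ZMod.natCast_self]

lemma tau_congr_mod (d j a : ℕ) (ha : 1 ≤ a) :
    tau d j a = tau d j ((a - 1) % d + 1) := by
  apply tau_congr
  have h : a - 1 + 1 = a := by omega
  conv_lhs => rw [← h]
  push_cast [ZMod.natCast_mod]
  ring

lemma tau_image (d j k : ℕ) (hj : j ≤ d) :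
    (tau d j k).image (alphaV d) = tau d (d - j) (k + j) := by
  ext v
  simp only [tau, Finset.image_image, Finset.mem_image, Finset.mem_range,
    Function.comp_apply, alphaV]
  constructor
  · rintro ⟨t, ht, rfl⟩
    by_cases h : t < j
    · refine ⟨t + (d - j), by omega, ?_⟩
      refine Prod.ext ?_ ?_
      · show (((k + j) + (t + (d - j)) : ℕ) : ZMod d) = ((k + t : ℕ) : ZMod d)
        have he : (k + j) + (t + (d - j)) = (k + t) + d := by omega
        rw [he]
        push_cast
        simp [ZMod.natCast_self]
      · show decide (t + (d - j) < d - j) = !decide (t < j)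
        rw [← decide_not, decide_eq_decide]
        omega
    · refine ⟨t - j, by omega, ?_⟩
      refine Prod.ext ?_ ?_
      · show (((k + j) + (t - j) : ℕ) : ZMod d) = ((k + t : ℕ) : ZMod d)
        congr 1
        omega
      · show decide (t - j < d - j) = !decide (t < j)
        rw [← decide_not, decide_eq_decide]
        omega
  · rintro ⟨s, hs, rfl⟩
    by_cases h : s < d - j
    · refine ⟨s + j, by omega, ?_⟩
      refine Prod.ext ?_ ?_
      · show ((k + (s + j) : ℕ) : ZMod d) = (((k + j) + s : ℕ) : ZMod d)
        congr 1
        omega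
      · show (!decide (s + j < j)) = decide (s < d - j)
        symm
        rw [← decide_not, decide_eq_decide]
        omega
    · refine ⟨s - (d - j), by omega, ?_⟩
      refine Prod.ext ?_ ?_
      · show ((k + (s - (d - j)) : ℕ) : ZMod d) = (((k + j) + s : ℕ) : ZMod d)
        have he : (k + j) + s = (k + (s - (d - j))) + d := by omega
        rw [he]
        push_cast
        simp [ZMod.natCast_self]
      · show (!decide (s - (d - j) < j)) = decide (s < d - j)
        symm
        rw [← decide_not, decide_eq_decide]
        omega


lemma alpha_set_invol (d : ℕ) (S : Set (Finset (Vtx d))) :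
    (fun F : Finset (Vtx d) => F.image (alphaV d)) ''
      ((fun F : Finset (Vtx d) => F.image (alphaV d)) '' S) = S := by
  rw [← Set.image_comp]
  have h : ((fun F : Finset (Vtx d) => F.image (alphaV d)) ∘
      fun F : Finset (Vtx d) => F.image (alphaV d)) = id := by
    funext F
    exact alpha_invol d F
  rw [h, Set.image_id]

lemma gamma_image (d j : ℕ) (hd : 1 ≤ d) (hj : j ≤ d) :
    (fun F : Finset (Vtx d) => F.image (alphaV d)) '' Gamma d j = Gamma d (d - j) := by
  ext G
  simp only [Set.mem_image, Gamma, Set.mem_setOf_eq]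
  constructor
  · rintro ⟨F, ⟨k, hk1, hk2, hFk⟩, rfl⟩
    refine ⟨(k + j - 1) % d + 1, Nat.le_add_left 1 _, Nat.mod_lt _ (by omega), ?_⟩
    rw [← tau_congr_mod d (d - j) (k + j) (by omega), ← tau_image d j k hj]
    exact Finset.image_subset_image hFk
  · rintro ⟨k, hk1, hk2, hGk⟩
    refine ⟨G.image (alphaV d),
      ⟨(k + (d - j) - 1) % d + 1, Nat.le_add_left 1 _, Nat.mod_lt _ (by omega), ?_⟩,
      alpha_invol d G⟩
    have h1 : d - (d - j) = j := by omega
    calc G.image (alphaV d) ⊆ (tau d (d - j) k).image (alphaV d) :=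
        Finset.image_subset_image hGk
      _ = tau d j (k + (d - j)) := by rw [tau_image d (d - j) k (by omega), h1]
      _ = tau d j ((k + (d - j) - 1) % d + 1) := tau_congr_mod d j _ (by omega)

lemma small_image (d m : ℕ) (hm : d = 2 * m) (hd : 3 ≤ d) :
    (fun F : Finset (Vtx d) => F.image (alphaV d)) ''
        {F | ∃ k, 1 ≤ k ∧ k ≤ m ∧ F ⊆ tau d (m - 1) k} =
      {F | ∃ k, m ≤ k ∧ k ≤ d - 1 ∧ F ⊆ tau d (m + 1) k} := by
  have hm2 : 2 ≤ m := by omega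
  ext G
  simp only [Set.mem_image, Set.mem_setOf_eq]
  constructor
  · rintro ⟨F, ⟨k, hk1, hk2, hFk⟩, rfl⟩
    refine ⟨k + (m - 1), by omega, by omega, ?_⟩
    have h1 : d - (m - 1) = m + 1 := by omega
    rw [← h1, ← tau_image d (m - 1) k (by omega)]
    exact Finset.image_subset_image hFk
  · rintro ⟨k, hk1, hk2, hGk⟩
    refine ⟨G.image (alphaV d), ⟨k - m + 1, by omega, by omega, ?_⟩, alpha_invol d G⟩
    have h1 : d - (m + 1) = m - 1 := by omega
    calc G.image (alphaV d) ⊆ (tau d (m + 1) k).image (alphaV d) :=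
        Finset.image_subset_image hGk
      _ = tau d (m - 1) (k + (m + 1)) := by rw [tau_image d (m + 1) k (by omega), h1]
      _ = tau d (m - 1) (k - m + 1) := tau_congr' d _ _ _ (by omega)

/-- For `d ≥ 3`: `α(τ_j^k) = τ_{d-j}^{k+j}` for all `0 ≤ j ≤ d`,
`1 ≤ k ≤ d`; consequently `α(Γ_j) = Γ_{d-j}` for all `0 ≤ j ≤ d`. Moreover, if `d = 2m+1`
is odd then `α` maps `Γ_m ∪ Γ_{m+1}` onto itself, and if `d = 2m` is even then `α` maps `γ`
onto `-γ` and maps `Γ_m ∪ γ ∪ (-γ)` onto itself; so in both cases the respective complex is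
centrally symmetric. -/
theorem statement8 (d : ℕ) (hd : 3 ≤ d) :
    (∀ j k, j ≤ d → 1 ≤ k → k ≤ d →
      (tau d j k).image (alphaV d) = tau d (d - j) (k + j)) ∧
    (∀ j, j ≤ d →
      (fun F : Finset (Vtx d) => F.image (alphaV d)) '' Gamma d j = Gamma d (d - j)) ∧
    (∀ m, d = 2 * m + 1 →
      (fun F : Finset (Vtx d) => F.image (alphaV d)) '' (Gamma d m ∪ Gamma d (m + 1)) =
        Gamma d m ∪ Gamma d (m + 1)) ∧
    (∀ m, d = 2 * m →
      ((fun F : Finset (Vtx d) => F.image (alphaV d)) ''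
          {F | ∃ k, 1 ≤ k ∧ k ≤ m ∧ F ⊆ tau d (m - 1) k} =
        {F | ∃ k, m ≤ k ∧ k ≤ d - 1 ∧ F ⊆ tau d (m + 1) k}) ∧
      ((fun F : Finset (Vtx d) => F.image (alphaV d)) ''
          (Gamma d m ∪ {F | ∃ k, 1 ≤ k ∧ k ≤ m ∧ F ⊆ tau d (m - 1) k} ∪
            {F | ∃ k, m ≤ k ∧ k ≤ d - 1 ∧ F ⊆ tau d (m + 1) k}) =
        Gamma d m ∪ {F | ∃ k, 1 ≤ k ∧ k ≤ m ∧ F ⊆ tau d (m - 1) k} ∪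
          {F | ∃ k, m ≤ k ∧ k ≤ d - 1 ∧ F ⊆ tau d (m + 1) k})) := by
  have hd1 : 1 ≤ d := by omega
  refine ⟨fun j k hj _ _ => tau_image d j k hj, fun j hj => gamma_image d j hd1 hj, ?_, ?_⟩
  · intro m hm
    rw [Set.image_union, gamma_image d m hd1 (by omega), gamma_image d (m + 1) hd1 (by omega),
      show d - m = m + 1 by omega, show d - (m + 1) = m by omega, Set.union_comm]
  · intro m hm
    refine ⟨small_image d m hm hd, ?_⟩
    rw [Set.image_union, Set.image_union, gamma_image d m hd1 (by omega),
      small_image d m hm hd, show d - m = m by omega]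
    have hb : (fun F : Finset (Vtx d) => F.image (alphaV d)) ''
        {F | ∃ k, m ≤ k ∧ k ≤ d - 1 ∧ F ⊆ tau d (m + 1) k} =
        {F | ∃ k, 1 ≤ k ∧ k ≤ m ∧ F ⊆ tau d (m - 1) k} := by
      rw [← small_image d m hm hd, alpha_set_invol]
    rw [hb, Set.union_right_comm]

end SpherePaper
end

section
/- Let d = 2m+1 be odd with d ≥ 3. Then, as simplicial complexes (downward-closed families of faces), (⋃_{k=0}^{m+1} Γ_k) ∩ (⋃_{k=m}^{d} Γ_k) = Γ_m ∪ Γ_{m+1}. -/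
namespace SpherePaper

lemma aux_mem_tau {d : ℕ} [NeZero d] {j k : ℕ} {v : Vtx d} :
    v ∈ tau d j k ↔ v.2 = decide ((v.1 - (k : ZMod d)).val < j) := by
  obtain ⟨i, b⟩ := v
  simp only [tau, Finset.mem_image, Finset.mem_range, Prod.mk.injEq]
  constructor
  · rintro ⟨t, ht, rfl, rfl⟩
    have h1 : (((k + t : ℕ) : ZMod d) - (k : ZMod d)) = (t : ZMod d) := by push_cast; ring
    rw [h1, ZMod.val_natCast, Nat.mod_eq_of_lt ht]
  · intro hb
    refine ⟨(i - (k : ZMod d)).val, ZMod.val_lt _, ?_, ?_⟩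
    · have : ((((i - (k : ZMod d)).val : ℕ)) : ZMod d) = i - (k : ZMod d) :=
        ZMod.natCast_rightInverse _
      push_cast
      rw [this]; ring
    · rw [hb]

lemma aux_gamma_iff {d : ℕ} [NeZero d] {j : ℕ} {F : Finset (Vtx d)} :
    F ∈ Gamma d j ↔ ∃ κ : ZMod d, ∀ v ∈ F, v.2 = decide ((v.1 - κ).val < j) := by
  constructor
  · rintro ⟨k, _, _, hsub⟩
    exact ⟨(k : ZMod d), fun v hv => aux_mem_tau.mp (hsub hv)⟩
  · rintro ⟨κ, hκ⟩
    refine ⟨if κ.val = 0 then d else κ.val, ?_, ?_, ?_⟩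
    · split
      · exact Nat.pos_of_ne_zero (NeZero.ne d)
      · omega
    · split
      · exact le_refl d
      · exact le_of_lt (ZMod.val_lt κ)
    · have hcast : ((if κ.val = 0 then d else κ.val : ℕ) : ZMod d) = κ := by
        split
        · rename_i h
          rw [ZMod.natCast_self]
          exact ((ZMod.val_eq_zero κ).mp h).symm
        · exact ZMod.natCast_rightInverse κ
      intro v hv
      rw [aux_mem_tau, hcast]
      exact hκ v hv

lemma aux_mod_cases (d x : ℕ) (h : x < 2 * d) :
    (x < d ∧ x % d = x) ∨ (d ≤ x ∧ x % d = x - d) := by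
  rcases Nat.lt_or_ge x d with h1 | h1
  · exact Or.inl ⟨h1, Nat.mod_eq_of_lt h1⟩
  · refine Or.inr ⟨h1, ?_⟩
    rw [Nat.mod_eq_sub_mod h1, Nat.mod_eq_of_lt (by omega)]

lemma aux_key (m a b ε : ℕ) (hm : 1 ≤ m) (ha : a ≤ m + 1) (hb1 : m ≤ b)
    (hb2 : b ≤ 2 * m + 1) (hε : ε < 2 * m + 1) :
    ∃ j c, (j = m ∨ j = m + 1) ∧ c < 2 * m + 1 ∧ ∀ n, n < 2 * m + 1 →
      ((n < a ∧ (n + ε) % (2 * m + 1) < b) → (n + c) % (2 * m + 1) < j) ∧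
      ((a ≤ n ∧ b ≤ (n + ε) % (2 * m + 1)) → j ≤ (n + c) % (2 * m + 1)) := by
  set d := 2 * m + 1 with hd
  by_cases hA : a = m + 1
  · refine ⟨m + 1, 0, Or.inr rfl, by omega, fun n hn => ?_⟩
    have e2 := aux_mod_cases d (n + 0) (by omega)
    constructor <;> intro h <;> omega
  by_cases hB : b ≤ m + 1
  · refine ⟨b, ε, by omega, hε, fun n hn => ?_⟩
    constructor <;> intro h <;> omega
  by_cases hε' : b ≤ ε
  · refine ⟨m, ε, Or.inl rfl, hε, fun n hn => ?_⟩
    have e1 := aux_mod_cases d (n + ε) (by omega)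
    constructor <;> intro h <;> omega
  by_cases h2a : a + ε ≤ m
  · refine ⟨m, ε, Or.inl rfl, hε, fun n hn => ?_⟩
    have e1 := aux_mod_cases d (n + ε) (by omega)
    constructor <;> intro h <;> omega
  by_cases hall : ∀ n, n < d → n < a ∨ (n + ε) % d < b
  · refine ⟨m + 1, 0, Or.inr rfl, by omega, fun n hn => ?_⟩
    have e2 := aux_mod_cases d (n + 0) (by omega)
    have := hall n hn
    constructor <;> intro h <;> omega
  · push_neg at hall
    obtain ⟨g, hg1, hg2, hg3⟩ := hall
    have e3 := aux_mod_cases d (g + ε) (by omega)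
    have hgd : g + ε < d := by omega
    set s := min a (b - ε) with hs
    refine ⟨m, m - s, Or.inl rfl, by omega, fun n hn => ?_⟩
    have e1 := aux_mod_cases d (n + ε) (by omega)
    have e2 := aux_mod_cases d (n + (m - s)) (by omega)
    constructor <;> intro h <;> omega

lemma aux_bool {v : Bool} {P1 P2 Q : Prop} [Decidable P1] [Decidable P2] [Decidable Q]
    (e1 : v = decide P1) (e2 : v = decide P2) (h : P1 → P2 → Q) (h' : ¬P1 → ¬P2 → ¬Q) :
    v = decide Q := by
  by_cases hP : P1
  · have hP2 : P2 := by
      have he : decide P1 = decide P2 := e1 ▸ e2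
      simpa [hP] using he
    simp [e1, hP, h hP hP2]
  · have hP2 : ¬P2 := by
      have he : decide P1 = decide P2 := e1 ▸ e2
      simpa [hP] using he.symm
    simp [e1, hP, h' hP hP2]

/-- Let `d = 2m+1` be odd, `d ≥ 3`. Then, as simplicial complexes,
`(⋃_{k=0}^{m+1} Γ_k) ∩ (⋃_{k=m}^{d} Γ_k) = Γ_m ∪ Γ_{m+1}`. -/
theorem statement9 (m : ℕ) (hm : 1 ≤ m) :
    ({F | ∃ k ≤ m + 1, F ∈ Gamma (2 * m + 1) k} ∩
        {F | ∃ k, m ≤ k ∧ k ≤ 2 * m + 1 ∧ F ∈ Gamma (2 * m + 1) k} :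
          Set (Finset (Vtx (2 * m + 1)))) =
      Gamma (2 * m + 1) m ∪ Gamma (2 * m + 1) (m + 1) := by
  ext F
  simp only [Set.mem_inter_iff, Set.mem_setOf_eq, Set.mem_union]
  constructor
  · rintro ⟨⟨a, ha, hFa⟩, ⟨b, hb1, hb2, hFb⟩⟩
    obtain ⟨κa, hκa⟩ := aux_gamma_iff.mp hFa
    obtain ⟨κb, hκb⟩ := aux_gamma_iff.mp hFb
    set ε := (κa - κb).val with hεdef
    obtain ⟨j, c, hj, hc, hmain⟩ := aux_key m a b ε hm ha hb1 hb2 (ZMod.val_lt _)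
    have hF : F ∈ Gamma (2 * m + 1) j := by
      rw [aux_gamma_iff]
      refine ⟨κa - (c : ZMod (2 * m + 1)), fun v hv => ?_⟩
      have h1 := hκa v hv
      have h2 := hκb v hv
      set n := (v.1 - κa).val with hndef
      have hnd : n < 2 * m + 1 := ZMod.val_lt _
      have hb' : (v.1 - κb).val = (n + ε) % (2 * m + 1) := by
        have hr : v.1 - κb = (v.1 - κa) + (κa - κb) := by ring
        rw [hr, ZMod.val_add]
      have hc' : (v.1 - (κa - (c : ZMod (2 * m + 1)))).val = (n + c) % (2 * m + 1) := by
        have hr : v.1 - (κa - (c : ZMod (2 * m + 1))) = (v.1 - κa) + (c : ZMod (2 * m + 1)) := by ring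
        rw [hr, ZMod.val_add, ZMod.val_natCast, Nat.mod_eq_of_lt hc]
      rw [hb'] at h2
      rw [hc']
      obtain ⟨t1, t2⟩ := hmain n hnd
      exact aux_bool h1 h2 (fun u1 u2 => t1 ⟨u1, u2⟩)
        (fun u1 u2 => by have := t2 ⟨by omega, by omega⟩; omega)
    rcases hj with rfl | rfl
    · exact Or.inl hF
    · exact Or.inr hF
  · rintro (hF | hF)
    · exact ⟨⟨m, by omega, hF⟩, ⟨m, le_refl m, by omega, hF⟩⟩
    · exact ⟨⟨m + 1, le_refl _, hF⟩, ⟨m + 1, by omega, by omega, hF⟩⟩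

end SpherePaper
end

section
/- Let d = 2m be even with d ≥ 4, let γ be the complex generated by {τ_{m−1}^k : 1 ≤ k ≤ m} and −γ the complex generated by {τ_{m+1}^k : m ≤ k ≤ d−1}. Then, as simplicial complexes, ((⋃_{k=0}^{m} Γ_k) ∪ (−γ)) ∩ ((⋃_{k=m}^{d} Γ_k) ∪ γ) = Γ_m ∪ γ ∪ (−γ). -/
namespace SpherePaper

lemma modsub {d : ℕ} (a b : ℕ) (ha : a < d) (hb : b < d) :
    (a + d - b) % d = if b ≤ a then a - b else a + d - b := by
  split_ifs with h
  · rw [show a + d - b = (a - b) + d by omega, Nat.add_mod_right]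
    exact Nat.mod_eq_of_lt (by omega)
  · exact Nat.mod_eq_of_lt (by omega)

lemma val_sub' {d : ℕ} [NeZero d] {a b : ℕ} (ha : a < d) (hb : b < d) :
    ((a : ZMod d) - (b : ZMod d)).val = (a + d - b) % d := by
  have hle : b ≤ a + d := by omega
  have h : ((a + d - b : ℕ) : ZMod d) = (a : ZMod d) - b := by
    push_cast [hle]
    simp [ZMod.natCast_self]
  rw [← h, ZMod.val_natCast]

lemma mem_tau {d : ℕ} [NeZero d] (j k : ℕ) (v : Vtx d) :
    v ∈ tau d j k ↔ v.2 = decide ((v.1 - (k : ZMod d)).val < j) := by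
  obtain ⟨i, b⟩ := v
  simp only [tau, Finset.mem_image, Finset.mem_range, Prod.mk.injEq]
  constructor
  · rintro ⟨t, htd, h1, h2⟩
    have hv : (i - (k : ZMod d)).val = t := by
      rw [← h1]
      have : ((k + t : ℕ) : ZMod d) - (k : ZMod d) = (t : ℕ) := by push_cast; ring
      rw [this, ZMod.val_natCast, Nat.mod_eq_of_lt htd]
    simp [hv, ← h2]
  · intro hb
    refine ⟨(i - (k : ZMod d)).val, ZMod.val_lt _, ?_, ?_⟩
    · push_cast
      rw [ZMod.natCast_val, ZMod.cast_id]
      ring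
    · exact hb.symm

lemma nat_core (m j j' u d : ℕ) (hd : d = 2 * m) (hm : 1 ≤ m) (hj : j ≤ m)
    (hj' : m ≤ j') (hj'd : j' ≤ d) (hu : u < d) :
    ∃ r < d, ∀ q < d,
      (((q + d - u) % d < j ∧ q < j') → (q + d - r) % d < m) ∧
      ((q + d - r) % d < m → (q + d - u) % d < j ∨ q < j') := by
  by_cases hc1 : u + j ≤ d
  · by_cases hc2 : u < j'
    · by_cases hc3 : u + m ≤ j'
      · refine ⟨u, hu, fun q hq => ?_⟩
        rw [modsub q u hq hu]
        split_ifs <;> omega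
      · refine ⟨j' - m, by omega, fun q hq => ?_⟩
        rw [modsub q u hq hu, modsub q (j' - m) hq (by omega)]
        split_ifs <;> omega
    · refine ⟨0, by omega, fun q hq => ?_⟩
      rw [modsub q u hq hu, modsub q 0 hq (by omega)]
      split_ifs <;> omega
  · by_cases hc2 : u < j'
    · refine ⟨u, hu, fun q hq => ?_⟩
      rw [modsub q u hq hu]
      split_ifs <;> omega
    · refine ⟨0, by omega, fun q hq => ?_⟩
      rw [modsub q u hq hu, modsub q 0 hq (by omega)]
      split_ifs <;> omega

lemma core {m : ℕ} (hm : 1 ≤ m) (j j' k k' : ℕ) (hj : j ≤ m) (hj' : m ≤ j')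
    (hj'd : j' ≤ 2 * m) (F : Finset (Vtx (2 * m)))
    (h1 : F ⊆ tau (2 * m) j k) (h2 : F ⊆ tau (2 * m) j' k') :
    ∃ k'', 1 ≤ k'' ∧ k'' ≤ 2 * m ∧ F ⊆ tau (2 * m) m k'' := by
  haveI : NeZero (2 * m) := ⟨by omega⟩
  set d := 2 * m with hd
  set c : ZMod d := (k' : ZMod d) with hc
  set u : ℕ := ((k : ZMod d) - c).val with hu
  have hud : u < d := ZMod.val_lt _
  obtain ⟨r, hrd, hr⟩ := nat_core m j j' u d hd hm hj hj' hj'd hud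
  set e : ZMod d := c + (r : ℕ) with he
  have hed : e.val < d := ZMod.val_lt _
  refine ⟨if e.val = 0 then d else e.val, ?_, ?_, ?_⟩
  · split_ifs with h <;> omega
  · split_ifs with h <;> omega
  · intro v hv
    have hA := (mem_tau j k v).mp (h1 hv)
    have hB := (mem_tau j' k' v).mp (h2 hv)
    rw [mem_tau]
    obtain ⟨i, b⟩ := v
    have hek : (((if e.val = 0 then d else e.val) : ℕ) : ZMod d) = e := by
      split_ifs with h
      · rw [ZMod.natCast_self]
        exact ((ZMod.val_eq_zero e).mp h).symm
      · rw [ZMod.natCast_val, ZMod.cast_id]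
    set q : ℕ := (i - c).val with hq
    have hqd : q < d := ZMod.val_lt _
    have hqc : (q : ZMod d) = i - c := by rw [hq, ZMod.natCast_val, ZMod.cast_id]
    have huc : (u : ZMod d) = (k : ZMod d) - c := by
      rw [hu, ZMod.natCast_val, ZMod.cast_id]
    have v1 : (i - (k : ZMod d)).val = (q + d - u) % d := by
      have h' : i - (k : ZMod d) = (q : ZMod d) - (u : ZMod d) := by
        rw [hqc, huc]; ring
      rw [h', val_sub' hqd hud]
    have v3 : ((i, b).1 - (((if e.val = 0 then d else e.val) : ℕ) : ZMod d)).val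
        = (q + d - r) % d := by
      rw [hek]
      have h' : i - e = (q : ZMod d) - (r : ZMod d) := by
        rw [he, hqc]; ring
      show (i - e).val = _
      rw [h', val_sub' hqd hrd]
    rw [v3]
    have hBq : b = decide (q < j') := hB
    have hAq : b = decide ((q + d - u) % d < j) := by
      have hA' : b = decide ((i - (k : ZMod d)).val < j) := hA
      rw [v1] at hA'; exact hA'
    have H := hr q hqd
    show b = decide ((q + d - r) % d < m)
    cases b
    · rw [eq_comm, decide_eq_false_iff_not] at hAq hBq ⊢
      tauto
    · rw [eq_comm, decide_eq_true_eq] at hAq hBq ⊢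
      tauto

/-- Let `d = 2m` be even, `d ≥ 4`; let `γ` be generated by `τ_{m-1}^k`
(`1 ≤ k ≤ m`) and `-γ` by `τ_{m+1}^k` (`m ≤ k ≤ d-1`). Then, as simplicial complexes,
`((⋃_{k=0}^{m} Γ_k) ∪ (-γ)) ∩ ((⋃_{k=m}^{d} Γ_k) ∪ γ) = Γ_m ∪ γ ∪ (-γ)`. -/
theorem statement10 (m : ℕ) (hm : 2 ≤ m) :
    (({F | ∃ k ≤ m, F ∈ Gamma (2 * m) k} ∪
        {F | ∃ k, m ≤ k ∧ k ≤ 2 * m - 1 ∧ F ⊆ tau (2 * m) (m + 1) k}) ∩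
      ({F | ∃ k, m ≤ k ∧ k ≤ 2 * m ∧ F ∈ Gamma (2 * m) k} ∪
        {F | ∃ k, 1 ≤ k ∧ k ≤ m ∧ F ⊆ tau (2 * m) (m - 1) k}) :
          Set (Finset (Vtx (2 * m)))) =
      Gamma (2 * m) m ∪ {F | ∃ k, 1 ≤ k ∧ k ≤ m ∧ F ⊆ tau (2 * m) (m - 1) k} ∪
        {F | ∃ k, m ≤ k ∧ k ≤ 2 * m - 1 ∧ F ⊆ tau (2 * m) (m + 1) k} := by

  ext F
  simp only [Set.mem_inter_iff, Set.mem_union, Set.mem_setOf_eq, Gamma]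
  constructor
  · rintro ⟨hL, hR⟩
    rcases hL with ⟨j, hjm, k, hk1, hkd, hF⟩ | hneg
    · rcases hR with ⟨j', hj'1, hj'2, k', hk'1, hk'2, hF'⟩ | hgam
      · obtain ⟨k'', h1, h2, h3⟩ :=
          core (by omega) j j' k k' hjm hj'1 hj'2 F hF hF'
        exact Or.inl (Or.inl ⟨k'', h1, h2, h3⟩)
      · exact Or.inl (Or.inr hgam)
    · exact Or.inr hneg
  · rintro ((⟨k, h1, h2, h3⟩ | ⟨k, hk1, hk2, hF⟩) | ⟨k, hk1, hk2, hF⟩)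
    · exact ⟨Or.inl ⟨m, le_refl m, k, h1, h2, h3⟩,
        Or.inl ⟨m, le_refl m, by omega, k, h1, h2, h3⟩⟩
    · exact ⟨Or.inl ⟨m - 1, by omega, k, hk1, by omega, hF⟩,
        Or.inr ⟨k, hk1, hk2, hF⟩⟩
    · exact ⟨Or.inr ⟨k, hk1, hk2, hF⟩,
        Or.inl ⟨m + 1, by omega, by omega, k, by omega, by omega, hF⟩⟩


end SpherePaper
end

section
/- For every d ≥ 5 (d odd or even), every one of the 2d+2 elements of V_{d+1} = {x_1,…,x_{d+1}, y_1,…,y_{d+1}} lies in some face of the boundary complex ∂(D_1 ∪ D_2); that is, ∂(D_1 ∪ D_2) has exactly 2d+2 vertices. -/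
namespace SpherePaper

/-- Vertices of `∂C_{d+1}^*`: `(i, false)` plays the role of `x_i` and `(i, true)` of `y_i`
for `i ∈ {1,…,d+1}`, where the index `d+1` is the residue `0` in `ZMod (d+1)`. -/
abbrev VtxA (d : ℕ) := ZMod (d + 1) × Bool

/-- The facet `τ_j^k` of `∂C_d^*`, viewed inside `∂C_{d+1}^*`; the indices of its vertices
are read cyclically mod `d` inside `{1, …, d}`. -/
def tauA (d j k : ℕ) : Finset (VtxA d) :=
  (Finset.range d).image fun t =>
    ((((k + t - 1) % d + 1 : ℕ) : ZMod (d + 1)), decide (t < j))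

/-- The complex `Γ_j` (inside `∂C_{d+1}^*`) generated by `τ_j^k`, `1 ≤ k ≤ d`. -/
def GammaA (d j : ℕ) : Set (Finset (VtxA d)) :=
  {F | ∃ k, 1 ≤ k ∧ k ≤ d ∧ F ⊆ tauA d j k}

/-- The cone `C * {w} = {F ∪ s : F ∈ C, s ⊆ {w}}`. -/
def coneC {α : Type*} [DecidableEq α] (C : Set (Finset α)) (w : α) : Set (Finset α) :=
  {H | ∃ G ∈ C, ∃ s : Finset α, s ⊆ {w} ∧ H = G ∪ s}

/-- The ball `B_1` of Definition 3.5: for odd `d = 2m+1` it is `⋃_{k=0}^{m+1} Γ_k`; for even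
`d = 2m` it is `(⋃_{k=0}^{m} Γ_k) ∪ (-γ)`, with `-γ` generated by `τ_{m+1}^k`, `m ≤ k ≤ d-1`. -/
def B1A (d : ℕ) : Set (Finset (VtxA d)) :=
  if d % 2 = 1 then {F | ∃ k ≤ d / 2 + 1, F ∈ GammaA d k}
  else
    {F | ∃ k ≤ d / 2, F ∈ GammaA d k} ∪
      {F | ∃ k, d / 2 ≤ k ∧ k ≤ d - 1 ∧ F ⊆ tauA d (d / 2 + 1) k}

/-- The ball `B_2` of Definition 3.5: for odd `d = 2m+1` it is `⋃_{k=m}^{d} Γ_k`; for even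
`d = 2m` it is `(⋃_{k=m}^{d} Γ_k) ∪ γ`, with `γ` generated by `τ_{m-1}^k`, `1 ≤ k ≤ m`. -/
def B2A (d : ℕ) : Set (Finset (VtxA d)) :=
  if d % 2 = 1 then {F | ∃ k, d / 2 ≤ k ∧ k ≤ d ∧ F ∈ GammaA d k}
  else
    {F | ∃ k, d / 2 ≤ k ∧ k ≤ d ∧ F ∈ GammaA d k} ∪
      {F | ∃ k, 1 ≤ k ∧ k ≤ d / 2 ∧ F ⊆ tauA d (d / 2 - 1) k}

/-- `D_1 = B_1 * {x_{d+1}}`. -/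
def D1A (d : ℕ) : Set (Finset (VtxA d)) :=
  coneC (B1A d) (((d + 1 : ℕ) : ZMod (d + 1)), false)

/-- `D_2 = B_2 * {y_{d+1}}`. -/
def D2A (d : ℕ) : Set (Finset (VtxA d)) :=
  coneC (B2A d) (((d + 1 : ℕ) : ZMod (d + 1)), true)

/-- The boundary complex of a pure `d`-dimensional complex `K`: the complex generated by the
`d`-element faces of `K` that lie in exactly one facet of `K`. -/
def bdry {α : Type*} (d : ℕ) (K : Set (Finset α)) : Set (Finset α) :=
  {G | ∃ F, F ∈ K ∧ F.card = d ∧ (∃! T, IsFacetOf K T ∧ F ⊆ T) ∧ G ⊆ F}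

/-- The boundary complex `∂(D_1 ∪ D_2)`. -/
def BD (d : ℕ) : Set (Finset (VtxA d)) := bdry d (D1A d ∪ D2A d)



variable {d : ℕ}

lemma castinj {i i' : ℕ} (h1 : i ≤ d) (h2 : i' ≤ d)
    (h : (i : ZMod (d+1)) = (i' : ZMod (d+1))) : i = i' := by
  have h3 : (i : ZMod (d+1)).val = (i' : ZMod (d+1)).val := by rw [h]
  rw [ZMod.val_cast_of_lt (by omega), ZMod.val_cast_of_lt (by omega)] at h3
  exact h3

lemma mem_tau_s11 {j k : ℕ} (hd : 1 ≤ d) (hk1 : 1 ≤ k) (hk2 : k ≤ d) (v : VtxA d) :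
    v ∈ tauA d j k ↔
      ∃ i, 1 ≤ i ∧ i ≤ d ∧ v = (((i:ℕ) : ZMod (d+1)), decide ((i + d - k) % d < j)) := by
  simp only [tauA, Finset.mem_image, Finset.mem_range]
  constructor
  · rintro ⟨t, ht, rfl⟩
    refine ⟨(k + t - 1) % d + 1, by omega,
      by have := Nat.mod_lt (k + t - 1) (show 0 < d by omega); omega, ?_⟩
    have harg : ((k + t - 1) % d + 1 + d - k) % d = t := by
      have e1 : k + t - 1 = (k-1) + t := by omega
      have hq : ((k-1) + t) % d < d := Nat.mod_lt _ (by omega)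
      have e2 : ((k-1) + t) % d + 1 + d - k = ((k-1)+t) % d + (d - (k-1)) := by omega
      rw [e1, e2, Nat.mod_add_mod]
      have e3 : (k-1) + t + (d - (k-1)) = t + d := by omega
      rw [e3, Nat.add_mod_right, Nat.mod_eq_of_lt ht]
    rw [harg]
  · rintro ⟨i, hi1, hi2, rfl⟩
    refine ⟨(i + d - k) % d, Nat.mod_lt _ (by omega), ?_⟩
    have harg : (k + (i + d - k) % d - 1) % d + 1 = i := by
      have e1 : k + (i + d - k) % d - 1 = (k-1) + (i + d - k) % d := by omega
      rw [e1, Nat.add_mod_mod]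
      have e2 : (k-1) + (i + d - k) = (i-1) + d := by omega
      rw [e2, Nat.add_mod_right, Nat.mod_eq_of_lt (by omega)]
      omega
    rw [harg]

lemma tau_mem_iff {j k i : ℕ} {b : Bool} (hd : 1 ≤ d) (hk1 : 1 ≤ k) (hk2 : k ≤ d)
    (hi1 : 1 ≤ i) (hi2 : i ≤ d) :
    (((i:ℕ) : ZMod (d+1)), b) ∈ tauA d j k ↔ b = decide ((i + d - k) % d < j) := by
  rw [mem_tau_s11 hd hk1 hk2]
  constructor
  · rintro ⟨i2, h1, h2, heq⟩
    rw [Prod.mk.injEq] at heq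
    have : i = i2 := castinj (by omega) (by omega) heq.1
    rw [this]; exact heq.2
  · rintro rfl
    exact ⟨i, hi1, hi2, rfl⟩

lemma fst_ne_zero {j k : ℕ} {v : VtxA d} (hd : 1 ≤ d) (hk1 : 1 ≤ k) (hk2 : k ≤ d)
    (h : v ∈ tauA d j k) : v.1 ≠ 0 := by
  rw [mem_tau_s11 hd hk1 hk2] at h
  obtain ⟨i, hi1, hi2, rfl⟩ := h
  intro h0
  have : i = 0 := castinj (i' := 0) hi2 (Nat.zero_le d)
    (by simp only [Nat.cast_zero]; exact h0)
  omega

lemma card_tau {j k : ℕ} (hd : 1 ≤ d) (hk1 : 1 ≤ k) (hk2 : k ≤ d) :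
    (tauA d j k).card = d := by
  rw [tauA, Finset.card_image_of_injOn, Finset.card_range]
  intro t1 h1 t2 h2 heq
  simp only [Finset.coe_range, Set.mem_Iio] at h1 h2
  have hfst : (((k + t1 - 1) % d + 1 : ℕ) : ZMod (d+1)) = (((k + t2 - 1) % d + 1 : ℕ) : ZMod (d+1)) := congrArg Prod.fst heq
  have hm1 : (k + t1 - 1) % d < d := Nat.mod_lt _ (by omega)
  have hm2 : (k + t2 - 1) % d < d := Nat.mod_lt _ (by omega)
  have he : (k + t1 - 1) % d = (k + t2 - 1) % d := by
    have := castinj (d := d) (by omega) (by omega) hfst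
    omega
  have e1 : k + t1 - 1 = (k-1) + t1 := by omega
  have e2 : k + t2 - 1 = (k-1) + t2 := by omega
  rw [e1, e2] at he
  have : t1 ≡ t2 [MOD d] := Nat.ModEq.add_left_cancel' (k-1) he
  have := this.eq_of_lt_of_lt h1 h2
  exact this

lemma exists_idx {k r : ℕ} (hd : 1 ≤ d) (hk1 : 1 ≤ k) (hk2 : k ≤ d) (hr : r < d) :
    ∃ i, 1 ≤ i ∧ i ≤ d ∧ (i + d - k) % d = r := by
  rcases lt_trichotomy (d - k) r with h | h | h
  · refine ⟨r - (d - k), by omega, by omega, ?_⟩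
    have e : r - (d - k) + d - k = r := by omega
    rw [e, Nat.mod_eq_of_lt hr]
  · refine ⟨d, by omega, le_refl d, ?_⟩
    have e : d + d - k = (d - k) + d := by omega
    rw [e, Nat.add_mod_right, Nat.mod_eq_of_lt (by omega), h]
  · refine ⟨r + k, by omega, by omega, ?_⟩
    have e : r + k + d - k = r + d := by omega
    rw [e, Nat.add_mod_right, Nat.mod_eq_of_lt hr]

lemma B1_struct (hd : 4 ≤ d) {F : Finset (VtxA d)} (hF : F ∈ B1A d) :
    ∃ j k, j + 1 ≤ d ∧ 1 ≤ k ∧ k ≤ d ∧ F ⊆ tauA d j k ∧ tauA d j k ∈ B1A d := by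
  unfold B1A at *
  split_ifs at * with hpar
  · obtain ⟨j, hj, k, hk1, hk2, hsub⟩ := hF
    exact ⟨j, k, by omega, hk1, hk2, hsub, ⟨j, hj, k, hk1, hk2, le_refl _⟩⟩
  · rcases hF with ⟨j, hj, k, hk1, hk2, hsub⟩ | ⟨k, hk1, hk2, hsub⟩
    · exact ⟨j, k, by omega, hk1, hk2, hsub, Or.inl ⟨j, hj, k, hk1, hk2, le_refl _⟩⟩
    · exact ⟨d/2+1, k, by omega, by omega, by omega, hsub,
        Or.inr ⟨k, hk1, hk2, le_refl _⟩⟩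

lemma B2_struct (hd : 4 ≤ d) {F : Finset (VtxA d)} (hF : F ∈ B2A d) :
    ∃ j k, 1 ≤ j ∧ j ≤ d ∧ 1 ≤ k ∧ k ≤ d ∧ F ⊆ tauA d j k ∧ tauA d j k ∈ B2A d := by
  unfold B2A at *
  split_ifs at * with hpar
  · obtain ⟨j, hj1, hj2, k, hk1, hk2, hsub⟩ := hF
    exact ⟨j, k, by omega, hj2, hk1, hk2, hsub, ⟨j, hj1, hj2, k, hk1, hk2, le_refl _⟩⟩
  · rcases hF with ⟨j, hj1, hj2, k, hk1, hk2, hsub⟩ | ⟨k, hk1, hk2, hsub⟩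
    · exact ⟨j, k, by omega, hj2, hk1, hk2, hsub, Or.inl ⟨j, hj1, hj2, k, hk1, hk2, le_refl _⟩⟩
    · exact ⟨d/2-1, k, by omega, by omega, hk1, by omega, hsub,
        Or.inr ⟨k, hk1, hk2, le_refl _⟩⟩

lemma cone_zero_false : (((d + 1 : ℕ) : ZMod (d + 1)), false) = ((0 : ZMod (d+1)), false) := by
  rw [ZMod.natCast_self]

lemma cone_zero_true : (((d + 1 : ℕ) : ZMod (d + 1)), true) = ((0 : ZMod (d+1)), true) := by
  rw [ZMod.natCast_self]

/-- every member of K is contained in a "closed facet" which is itself in K -/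
lemma K_struct (hd : 4 ≤ d) {T : Finset (VtxA d)} (hT : T ∈ D1A d ∪ D2A d) :
    ∃ j k b, 1 ≤ k ∧ k ≤ d ∧ (b = false → j + 1 ≤ d) ∧ (b = true → 1 ≤ j ∧ j ≤ d) ∧
      T ⊆ tauA d j k ∪ {((0 : ZMod (d+1)), b)} ∧
      tauA d j k ∪ {((0 : ZMod (d+1)), b)} ∈ D1A d ∪ D2A d := by
  rcases hT with ⟨G, hG, s, hs, rfl⟩ | ⟨G, hG, s, hs, rfl⟩
  · obtain ⟨j, k, hj, hk1, hk2, hsub, htau⟩ := B1_struct hd hG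
    refine ⟨j, k, false, hk1, hk2, fun _ => hj, by simp, ?_, ?_⟩
    · rw [← cone_zero_false]
      exact Finset.union_subset_union hsub hs
    · exact Or.inl ⟨tauA d j k, htau, {((0 : ZMod (d+1)), false)},
        by rw [cone_zero_false], rfl⟩
  · obtain ⟨j, k, hj1, hj2, hk1, hk2, hsub, htau⟩ := B2_struct hd hG
    refine ⟨j, k, true, hk1, hk2, by simp, fun _ => ⟨hj1, hj2⟩, ?_, ?_⟩
    · rw [← cone_zero_true]
      exact Finset.union_subset_union hsub hs
    · exact Or.inr ⟨tauA d j k, htau, {((0 : ZMod (d+1)), true)},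
        by rw [cone_zero_true], rfl⟩

lemma card_le_K (hd : 4 ≤ d) {T : Finset (VtxA d)} (hT : T ∈ D1A d ∪ D2A d) :
    T.card ≤ d + 1 := by
  obtain ⟨j, k, b, hk1, hk2, -, -, hsub, -⟩ := K_struct hd hT
  calc T.card ≤ (tauA d j k ∪ {((0 : ZMod (d+1)), b)}).card := Finset.card_le_card hsub
    _ ≤ (tauA d j k).card + 1 := by
        refine (Finset.card_union_le _ _).trans ?_
        simp
    _ = d + 1 := by rw [card_tau (by omega) hk1 hk2]

lemma card_closed_tau {j k : ℕ} {b : Bool} (hd : 4 ≤ d) (hk1 : 1 ≤ k) (hk2 : k ≤ d) :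
    (tauA d j k ∪ {((0 : ZMod (d+1)), b)}).card = d + 1 := by
  rw [Finset.card_union_of_disjoint, card_tau (by omega) hk1 hk2, Finset.card_singleton]
  rw [Finset.disjoint_singleton_right]
  intro hmem
  exact fst_ne_zero (by omega) hk1 hk2 hmem rfl

lemma isFacet_closed_tau {j k : ℕ} {b : Bool} (hd : 4 ≤ d) (hk1 : 1 ≤ k) (hk2 : k ≤ d)
    (hK : tauA d j k ∪ {((0 : ZMod (d+1)), b)} ∈ D1A d ∪ D2A d) :
    IsFacetOf (D1A d ∪ D2A d) (tauA d j k ∪ {((0 : ZMod (d+1)), b)}) := by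
  refine ⟨hK, fun G hG hsub => ?_⟩
  refine Finset.eq_of_subset_of_card_le hsub ?_
  rw [card_closed_tau hd hk1 hk2]
  exact card_le_K hd hG

lemma facet_form (hd : 4 ≤ d) {T : Finset (VtxA d)}
    (hT : IsFacetOf (D1A d ∪ D2A d) T) :
    ∃ j k b, 1 ≤ k ∧ k ≤ d ∧ (b = false → j + 1 ≤ d) ∧ (b = true → 1 ≤ j ∧ j ≤ d) ∧
      T = tauA d j k ∪ {((0 : ZMod (d+1)), b)} := by
  obtain ⟨j, k, b, hk1, hk2, hb1, hb2, hsub, hK⟩ := K_struct hd hT.1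
  exact ⟨j, k, b, hk1, hk2, hb1, hb2, hT.2 _ hK hsub⟩

lemma tau0_all {i : ℕ} (hd : 1 ≤ d) (hi1 : 1 ≤ i) (hi2 : i ≤ d) :
    (((i:ℕ) : ZMod (d+1)), false) ∈ tauA d 0 1 := by
  rw [tau_mem_iff hd (le_refl 1) hd hi1 hi2]
  simp

lemma taud_all {i : ℕ} (hd : 1 ≤ d) (hi1 : 1 ≤ i) (hi2 : i ≤ d) :
    (((i:ℕ) : ZMod (d+1)), true) ∈ tauA d d 1 := by
  rw [tau_mem_iff hd (le_refl 1) hd hi1 hi2]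
  rw [eq_comm, decide_eq_true_eq]
  exact Nat.mod_lt _ (by omega)

lemma tau0_B1 (hd : 1 ≤ d) : tauA d 0 1 ∈ B1A d := by
  unfold B1A
  split_ifs with hpar
  · exact ⟨0, by omega, 1, le_refl 1, hd, le_refl _⟩
  · exact Or.inl ⟨0, by omega, 1, le_refl 1, hd, le_refl _⟩

lemma taud_B2 (hd : 1 ≤ d) : tauA d d 1 ∈ B2A d := by
  unfold B2A
  split_ifs with hpar
  · exact ⟨d, by omega, le_refl d, 1, le_refl 1, hd, le_refl _⟩
  · exact Or.inl ⟨d, by omega, le_refl d, 1, le_refl 1, hd, le_refl _⟩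

lemma mem_K_of_B1 {F : Finset (VtxA d)} (h : F ∈ B1A d) : F ∈ D1A d ∪ D2A d :=
  Or.inl ⟨F, h, ∅, Finset.empty_subset _, (Finset.union_empty _).symm⟩

lemma mem_K_of_B2 {F : Finset (VtxA d)} (h : F ∈ B2A d) : F ∈ D1A d ∪ D2A d :=
  Or.inr ⟨F, h, ∅, Finset.empty_subset _, (Finset.union_empty _).symm⟩

lemma closed_tau_K_of_B1 {j k : ℕ} (h : tauA d j k ∈ B1A d) :
    tauA d j k ∪ {((0 : ZMod (d+1)), false)} ∈ D1A d ∪ D2A d :=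
  Or.inl ⟨tauA d j k, h, {((0 : ZMod (d+1)), false)}, by rw [cone_zero_false], rfl⟩

lemma closed_tau_K_of_B2 {j k : ℕ} (h : tauA d j k ∈ B2A d) :
    tauA d j k ∪ {((0 : ZMod (d+1)), true)} ∈ D1A d ∪ D2A d :=
  Or.inr ⟨tauA d j k, h, {((0 : ZMod (d+1)), true)}, by rw [cone_zero_true], rfl⟩

lemma bd_tau0 (hd : 5 ≤ d) : tauA d 0 1 ∈ BD d := by
  have hd1 : 1 ≤ d := by omega
  refine ⟨tauA d 0 1, mem_K_of_B1 (tau0_B1 hd1), card_tau hd1 (le_refl 1) hd1, ?_,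
    le_refl _⟩
  refine ⟨tauA d 0 1 ∪ {((0 : ZMod (d+1)), false)},
    ⟨isFacet_closed_tau (by omega) (le_refl 1) hd1 (closed_tau_K_of_B1 (tau0_B1 hd1)),
     Finset.subset_union_left⟩, ?_⟩
  rintro T ⟨hTfac, hsub⟩
  obtain ⟨j, k, b, hk1, hk2, hb1, hb2, rfl⟩ := facet_form (by omega) hTfac
  have hsubtau : tauA d 0 1 ⊆ tauA d j k := by
    intro v hv
    rcases Finset.mem_union.mp (hsub hv) with h | h
    · exact h
    · exact absurd (by rw [Finset.mem_singleton.mp h]) (fst_ne_zero hd1 (le_refl 1) hd1 hv)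
  cases b with
  | false =>
    have heq : tauA d j k = tauA d 0 1 :=
      (Finset.eq_of_subset_of_card_le hsubtau
        (by rw [card_tau hd1 hk1 hk2, card_tau hd1 (le_refl 1) hd1])).symm
    rw [heq]
  | true =>
    exfalso
    obtain ⟨hj1, hj2⟩ := hb2 rfl
    obtain ⟨i, hi1, hi2, hmod⟩ := exists_idx (r := 0) hd1 hk1 hk2 (by omega)
    have hb := (tau_mem_iff hd1 hk1 hk2 hi1 hi2).mp (hsubtau (tau0_all hd1 hi1 hi2))
    rw [hmod] at hb
    rw [eq_comm, decide_eq_false_iff_not] at hb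
    omega

lemma bd_taud (hd : 5 ≤ d) : tauA d d 1 ∈ BD d := by
  have hd1 : 1 ≤ d := by omega
  refine ⟨tauA d d 1, mem_K_of_B2 (taud_B2 hd1), card_tau hd1 (le_refl 1) hd1, ?_,
    le_refl _⟩
  refine ⟨tauA d d 1 ∪ {((0 : ZMod (d+1)), true)},
    ⟨isFacet_closed_tau (by omega) (le_refl 1) hd1 (closed_tau_K_of_B2 (taud_B2 hd1)),
     Finset.subset_union_left⟩, ?_⟩
  rintro T ⟨hTfac, hsub⟩
  obtain ⟨j, k, b, hk1, hk2, hb1, hb2, rfl⟩ := facet_form (by omega) hTfac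
  have hsubtau : tauA d d 1 ⊆ tauA d j k := by
    intro v hv
    rcases Finset.mem_union.mp (hsub hv) with h | h
    · exact h
    · exact absurd (by rw [Finset.mem_singleton.mp h]) (fst_ne_zero hd1 (le_refl 1) hd1 hv)
  cases b with
  | true =>
    have heq : tauA d j k = tauA d d 1 :=
      (Finset.eq_of_subset_of_card_le hsubtau
        (by rw [card_tau hd1 hk1 hk2, card_tau hd1 (le_refl 1) hd1])).symm
    rw [heq]
  | false =>
    exfalso
    have hj := hb1 rfl
    obtain ⟨i, hi1, hi2, hmod⟩ := exists_idx (r := d - 1) hd1 hk1 hk2 (by omega)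
    have hb := (tau_mem_iff hd1 hk1 hk2 hi1 hi2).mp (hsubtau (taud_all hd1 hi1 hi2))
    rw [hmod] at hb
    rw [eq_comm, decide_eq_true_eq] at hb
    omega

lemma cast_ne_cast {i i' : ℕ} (h1 : i ≤ d) (h2 : i' ≤ d) (h : i ≠ i') :
    ((i:ℕ) : ZMod (d+1)) ≠ ((i':ℕ) : ZMod (d+1)) :=
  fun he => h (castinj h1 h2 he)

lemma cast_ne_zero' {i : ℕ} (h1 : 1 ≤ i) (h2 : i ≤ d) : ((i:ℕ) : ZMod (d+1)) ≠ 0 := by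
  intro he
  have : i = 0 := castinj h2 (Nat.zero_le d) (by simpa using he)
  omega

lemma bd_Fx (hd : 5 ≤ d) :
    insert ((0 : ZMod (d+1)), false) (tauA d 1 1 \ {(((3:ℕ) : ZMod (d+1)), false)}) ∈ BD d := by
  have hd1 : 1 ≤ d := by omega
  set x3 : VtxA d := (((3:ℕ) : ZMod (d+1)), false) with hx3def
  set S : Finset (VtxA d) := tauA d 1 1 \ {x3} with hSdef
  set F : Finset (VtxA d) := insert ((0 : ZMod (d+1)), false) S with hFdef
  have hx3 : x3 ∈ tauA d 1 1 := by
    rw [hx3def, tau_mem_iff hd1 (le_refl 1) hd1 (by omega) (by omega)]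
    rw [show 3 + d - 1 = d + 2 from by omega, Nat.add_mod_left,
      Nat.mod_eq_of_lt (show 2 < d by omega)]
    rfl
  have hSB1 : S ∈ B1A d := by
    unfold B1A
    split_ifs with hpar
    · exact ⟨1, by omega, 1, le_refl 1, hd1, Finset.sdiff_subset⟩
    · exact Or.inl ⟨1, by omega, 1, le_refl 1, hd1, Finset.sdiff_subset⟩
  have htau1B1 : tauA d 1 1 ∈ B1A d := by
    unfold B1A
    split_ifs with hpar
    · exact ⟨1, by omega, 1, le_refl 1, hd1, le_refl _⟩
    · exact Or.inl ⟨1, by omega, 1, le_refl 1, hd1, le_refl _⟩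
  have hzero_notin : ((0 : ZMod (d+1)), false) ∉ S := by
    intro h
    exact fst_ne_zero hd1 (le_refl 1) hd1 (Finset.mem_sdiff.mp h).1 rfl
  have hcardS : S.card = d - 1 := by
    rw [hSdef, Finset.card_sdiff_of_subset (Finset.singleton_subset_iff.mpr hx3),
      card_tau hd1 (le_refl 1) hd1, Finset.card_singleton]
  have hcardF : F.card = d := by
    rw [hFdef, Finset.card_insert_of_notMem hzero_notin, hcardS]
    omega
  have hFK : F ∈ D1A d ∪ D2A d := by
    refine Or.inl ⟨S, hSB1, {((0 : ZMod (d+1)), false)}, by rw [cone_zero_false], ?_⟩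
    rw [hFdef, Finset.insert_eq, Finset.union_comm]
  refine ⟨F, hFK, hcardF, ?_, le_refl _⟩
  refine ⟨tauA d 1 1 ∪ {((0 : ZMod (d+1)), false)},
    ⟨isFacet_closed_tau (by omega) (le_refl 1) hd1 (closed_tau_K_of_B1 htau1B1), ?_⟩, ?_⟩
  · rw [hFdef, Finset.insert_subset_iff]
    exact ⟨Finset.mem_union_right _ (Finset.mem_singleton_self _),
      Finset.sdiff_subset.trans Finset.subset_union_left⟩
  rintro T ⟨hTfac, hsubF⟩
  obtain ⟨j, k, b, hk1, hk2, hb1, hb2, rfl⟩ := facet_form (by omega) hTfac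
  -- `b = false` since `(0, false) ∈ T`
  have h0F : ((0 : ZMod (d+1)), false) ∈ tauA d j k ∪ {((0 : ZMod (d+1)), b)} :=
    hsubF (Finset.mem_insert_self _ _)
  have hbfalse : b = false := by
    rcases Finset.mem_union.mp h0F with h | h
    · exact absurd rfl (fst_ne_zero hd1 hk1 hk2 h)
    · have := Finset.mem_singleton.mp h
      exact (congrArg Prod.snd this).symm
  subst hbfalse
  -- the three key vertices
  have hmemS : ∀ i : ℕ, 1 ≤ i → i ≤ d → i ≠ 3 → ∀ bb : Bool,
      (((i:ℕ) : ZMod (d+1)), bb) ∈ tauA d 1 1 →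
      (((i:ℕ) : ZMod (d+1)), bb) ∈ tauA d j k := by
    intro i hi1 hi2 hi3 bb hmem
    have hinS : (((i:ℕ) : ZMod (d+1)), bb) ∈ S := by
      rw [hSdef, Finset.mem_sdiff]
      refine ⟨hmem, ?_⟩
      rw [Finset.mem_singleton, hx3def]
      intro he
      exact (cast_ne_cast hi2 (by omega) hi3) (congrArg Prod.fst he)
    have := hsubF (Finset.mem_insert_of_mem hinS)
    rcases Finset.mem_union.mp this with h | h
    · exact h
    · exact absurd (congrArg Prod.fst (Finset.mem_singleton.mp h))
        (cast_ne_zero' hi1 hi2)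
  have hy1 : (((1:ℕ) : ZMod (d+1)), true) ∈ tauA d 1 1 := by
    rw [tau_mem_iff hd1 (le_refl 1) hd1 (le_refl 1) hd1]
    rw [show 1 + d - 1 = d from by omega, Nat.mod_self]
    rfl
  have hx2 : (((2:ℕ) : ZMod (d+1)), false) ∈ tauA d 1 1 := by
    rw [tau_mem_iff hd1 (le_refl 1) hd1 (by omega) (by omega)]
    rw [show 2 + d - 1 = d + 1 from by omega, Nat.add_mod_left,
      Nat.mod_eq_of_lt (show 1 < d by omega)]
    rfl
  have hxd : (((d:ℕ) : ZMod (d+1)), false) ∈ tauA d 1 1 := by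
    rw [tau_mem_iff hd1 (le_refl 1) hd1 hd1 (le_refl d)]
    rw [show d + d - 1 = (d - 1) + d from by omega, Nat.add_mod_right,
      Nat.mod_eq_of_lt (show d - 1 < d by omega)]
    rw [eq_comm, decide_eq_false_iff_not]
    omega
  have hp1 := (tau_mem_iff hd1 hk1 hk2 (le_refl 1) hd1).mp
    (hmemS 1 (le_refl 1) hd1 (by omega) true hy1)
  have hp2 := (tau_mem_iff hd1 hk1 hk2 (by omega) (by omega)).mp
    (hmemS 2 (by omega) (by omega) (by omega) false hx2)
  have hp3 := (tau_mem_iff hd1 hk1 hk2 hd1 (le_refl d)).mp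
    (hmemS d hd1 (le_refl d) (by omega) false hxd)
  rw [eq_comm, decide_eq_true_eq] at hp1
  rw [eq_comm, decide_eq_false_iff_not] at hp2
  rw [eq_comm, decide_eq_false_iff_not] at hp3
  have e3 : (d + d - k) % d = d - k := by
    rw [show d + d - k = d + (d - k) from by omega, Nat.add_mod_left,
      Nat.mod_eq_of_lt (by omega)]
  rw [e3] at hp3
  rcases Nat.lt_or_ge k 2 with hk | hk
  · have hk1' : k = 1 := by omega
    subst hk1'
    rw [show 1 + d - 1 = d from by omega, Nat.mod_self] at hp1
    rw [show 2 + d - 1 = d + 1 from by omega, Nat.add_mod_left,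
      Nat.mod_eq_of_lt (show 1 < d by omega)] at hp2
    have : j = 1 := by omega
    rw [this]
  · exfalso
    rw [Nat.mod_eq_of_lt (show 1 + d - k < d by omega)] at hp1
    omega

lemma bd_Fy (hd : 5 ≤ d) :
    insert ((0 : ZMod (d+1)), true) (tauA d (d-1) 2 \ {(((4:ℕ) : ZMod (d+1)), true)}) ∈ BD d := by
  have hd1 : 1 ≤ d := by omega
  have hk2' : (2:ℕ) ≤ d := by omega
  set y4 : VtxA d := (((4:ℕ) : ZMod (d+1)), true) with hy4def
  set S : Finset (VtxA d) := tauA d (d-1) 2 \ {y4} with hSdef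
  set F : Finset (VtxA d) := insert ((0 : ZMod (d+1)), true) S with hFdef
  have hy4 : y4 ∈ tauA d (d-1) 2 := by
    rw [hy4def, tau_mem_iff hd1 (by omega) hk2' (by omega) (by omega)]
    rw [show 4 + d - 2 = d + 2 from by omega, Nat.add_mod_left,
      Nat.mod_eq_of_lt (show 2 < d by omega), eq_comm, decide_eq_true_eq]
    omega
  have hSB2 : S ∈ B2A d := by
    unfold B2A
    split_ifs with hpar
    · exact ⟨d-1, by omega, by omega, 2, by omega, hk2', Finset.sdiff_subset⟩
    · exact Or.inl ⟨d-1, by omega, by omega, 2, by omega, hk2', Finset.sdiff_subset⟩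
  have htauB2 : tauA d (d-1) 2 ∈ B2A d := by
    unfold B2A
    split_ifs with hpar
    · exact ⟨d-1, by omega, by omega, 2, by omega, hk2', le_refl _⟩
    · exact Or.inl ⟨d-1, by omega, by omega, 2, by omega, hk2', le_refl _⟩
  have hzero_notin : ((0 : ZMod (d+1)), true) ∉ S := by
    intro h
    exact fst_ne_zero hd1 (by omega) hk2' (Finset.mem_sdiff.mp h).1 rfl
  have hcardS : S.card = d - 1 := by
    rw [hSdef, Finset.card_sdiff_of_subset (Finset.singleton_subset_iff.mpr hy4),
      card_tau hd1 (by omega) hk2', Finset.card_singleton]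
  have hcardF : F.card = d := by
    rw [hFdef, Finset.card_insert_of_notMem hzero_notin, hcardS]
    omega
  have hFK : F ∈ D1A d ∪ D2A d := by
    refine Or.inr ⟨S, hSB2, {((0 : ZMod (d+1)), true)}, by rw [cone_zero_true], ?_⟩
    rw [hFdef, Finset.insert_eq, Finset.union_comm]
  refine ⟨F, hFK, hcardF, ?_, le_refl _⟩
  refine ⟨tauA d (d-1) 2 ∪ {((0 : ZMod (d+1)), true)},
    ⟨isFacet_closed_tau (by omega) (by omega) hk2' (closed_tau_K_of_B2 htauB2), ?_⟩, ?_⟩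
  · rw [hFdef, Finset.insert_subset_iff]
    exact ⟨Finset.mem_union_right _ (Finset.mem_singleton_self _),
      Finset.sdiff_subset.trans Finset.subset_union_left⟩
  rintro T ⟨hTfac, hsubF⟩
  obtain ⟨j, k, b, hk1, hk2, hb1, hb2, rfl⟩ := facet_form (by omega) hTfac
  have h0F : ((0 : ZMod (d+1)), true) ∈ tauA d j k ∪ {((0 : ZMod (d+1)), b)} :=
    hsubF (Finset.mem_insert_self _ _)
  have hbtrue : b = true := by
    rcases Finset.mem_union.mp h0F with h | h
    · exact absurd rfl (fst_ne_zero hd1 hk1 hk2 h)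
    · have := Finset.mem_singleton.mp h
      exact (congrArg Prod.snd this).symm
  subst hbtrue
  have hmemS : ∀ i : ℕ, 1 ≤ i → i ≤ d → i ≠ 4 → ∀ bb : Bool,
      (((i:ℕ) : ZMod (d+1)), bb) ∈ tauA d (d-1) 2 →
      (((i:ℕ) : ZMod (d+1)), bb) ∈ tauA d j k := by
    intro i hi1 hi2 hi4 bb hmem
    have hinS : (((i:ℕ) : ZMod (d+1)), bb) ∈ S := by
      rw [hSdef, Finset.mem_sdiff]
      refine ⟨hmem, ?_⟩
      rw [Finset.mem_singleton, hy4def]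
      intro he
      exact (cast_ne_cast hi2 (by omega) hi4) (congrArg Prod.fst he)
    have := hsubF (Finset.mem_insert_of_mem hinS)
    rcases Finset.mem_union.mp this with h | h
    · exact h
    · exact absurd (congrArg Prod.fst (Finset.mem_singleton.mp h))
        (cast_ne_zero' hi1 hi2)
  have hx1 : (((1:ℕ) : ZMod (d+1)), false) ∈ tauA d (d-1) 2 := by
    rw [tau_mem_iff hd1 (by omega) hk2' (le_refl 1) hd1]
    rw [show 1 + d - 2 = d - 1 from by omega,
      Nat.mod_eq_of_lt (show d - 1 < d by omega), eq_comm, decide_eq_false_iff_not]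
    omega
  have hy2 : (((2:ℕ) : ZMod (d+1)), true) ∈ tauA d (d-1) 2 := by
    rw [tau_mem_iff hd1 (by omega) hk2' (by omega) hk2']
    rw [show 2 + d - 2 = d from by omega, Nat.mod_self, eq_comm, decide_eq_true_eq]
    omega
  have hyd : (((d:ℕ) : ZMod (d+1)), true) ∈ tauA d (d-1) 2 := by
    rw [tau_mem_iff hd1 (by omega) hk2' hd1 (le_refl d)]
    rw [show d + d - 2 = (d - 2) + d from by omega, Nat.add_mod_right,
      Nat.mod_eq_of_lt (show d - 2 < d by omega), eq_comm, decide_eq_true_eq]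
    omega
  have hp1 := (tau_mem_iff hd1 hk1 hk2 (le_refl 1) hd1).mp
    (hmemS 1 (le_refl 1) hd1 (by omega) false hx1)
  have hp2 := (tau_mem_iff hd1 hk1 hk2 (by omega) (by omega)).mp
    (hmemS 2 (by omega) (by omega) (by omega) true hy2)
  have hp3 := (tau_mem_iff hd1 hk1 hk2 hd1 (le_refl d)).mp
    (hmemS d hd1 (le_refl d) (by omega) true hyd)
  rw [eq_comm, decide_eq_false_iff_not] at hp1
  rw [eq_comm, decide_eq_true_eq] at hp2
  rw [eq_comm, decide_eq_true_eq] at hp3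
  have e3 : (d + d - k) % d = d - k := by
    rw [show d + d - k = d + (d - k) from by omega, Nat.add_mod_left,
      Nat.mod_eq_of_lt (by omega)]
  rw [e3] at hp3
  rcases Nat.lt_or_ge k 2 with hk | hk
  · exfalso
    have hk1' : k = 1 := by omega
    subst hk1'
    rw [show 1 + d - 1 = d from by omega, Nat.mod_self] at hp1
    omega
  rcases Nat.lt_or_ge k 3 with hk3 | hk3
  · have hk2'' : k = 2 := by omega
    subst hk2''
    rw [show 1 + d - 2 = d - 1 from by omega,
      Nat.mod_eq_of_lt (show d - 1 < d by omega)] at hp1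
    have : j = d - 1 := by omega
    rw [this]
  · exfalso
    rw [Nat.mod_eq_of_lt (show 1 + d - k < d by omega)] at hp1
    rw [Nat.mod_eq_of_lt (show 2 + d - k < d by omega)] at hp2
    omega

/-- For every `d ≥ 5`, every one of the `2d+2` elements of
`V_{d+1} = {x_1,…,x_{d+1},y_1,…,y_{d+1}}` lies in some face of `∂(D_1 ∪ D_2)`; that is,
`∂(D_1 ∪ D_2)` has exactly `2d+2` vertices. -/
theorem statement11 (d : ℕ) (hd : 5 ≤ d) :
    (∀ v : VtxA d, ∃ F ∈ BD d, v ∈ F) ∧ Nat.card (VtxA d) = 2 * d + 2 := by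
  have hd1 : 1 ≤ d := by omega
  constructor
  · rintro ⟨i, b⟩
    by_cases h0 : i = 0
    · subst h0
      cases b with
      | false =>
        exact ⟨_, bd_Fx hd, Finset.mem_insert_self _ _⟩
      | true =>
        exact ⟨_, bd_Fy hd, Finset.mem_insert_self _ _⟩
    · have hv : ((i.val : ℕ) : ZMod (d+1)) = i := ZMod.natCast_rightInverse i
      have hval1 : 1 ≤ i.val := by
        rcases Nat.eq_zero_or_pos i.val with h | h
        · exact absurd ((ZMod.val_eq_zero i).mp h) h0
        · exact h
      have hval2 : i.val ≤ d := by
        have := ZMod.val_lt i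
        omega
      cases b with
      | false =>
        refine ⟨_, bd_tau0 hd, ?_⟩
        rw [← hv]
        exact tau0_all hd1 hval1 hval2
      | true =>
        refine ⟨_, bd_taud hd, ?_⟩
        rw [← hv]
        exact taud_all hd1 hval1 hval2
  · rw [show (VtxA d) = (ZMod (d+1) × Bool) from rfl, Nat.card_prod, Nat.card_zmod]
    simp [Nat.card_eq_fintype_card]
    ring

end SpherePaper
end

section
/- Let d ≥ 5 be odd. Consider the following permutations of V_{d+1}: the antipodal map α (x_j ↦ y_j and y_j ↦ x_j for all 1 ≤ j ≤ d+1); the permutation R fixing x_{d+1} and y_{d+1} and sending x_j ↦ x_{d−j+1}, y_j ↦ y_{d−j+1} for 1 ≤ j ≤ d; and the permutation S fixing x_{d+1} and y_{d+1} and sending x_j ↦ x_{j+1}, y_j ↦ y_{j+1} (indices mod d) for 1 ≤ j ≤ d. Then each of α, R, S maps the face set of ∂(D_1 ∪ D_2) onto itself (i.e., induces a simplicial automorphism of ∂(D_1 ∪ D_2)), α acts freely on the faces, and the subgroup of permutations of V_{d+1} generated by α, R, S is isomorphic to ℤ/2ℤ × 𝒟_d, the direct product of the group of order 2 with the dihedral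 group of order 2d. -/
namespace SpherePaper

/-- The action of the permutation `S` on indices: it fixes the index `d+1` (the residue `0`)
and sends the index `j ∈ {1,…,d}` to `j+1` read mod `d` inside `{1,…,d}`. -/
def sIdx (d : ℕ) (i : ZMod (d + 1)) : ZMod (d + 1) :=
  if i = 0 then 0 else if i = (d : ZMod (d + 1)) then 1 else i + 1


def iota (d : ℕ) (m : ZMod d) : ZMod (d + 1) := ((m.val + 1 : ℕ) : ZMod (d + 1))

variable {d : ℕ}


lemma iota_val (hd0 : 0 < d) (m : ZMod d) : (iota d m).val = m.val + 1 := by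
  haveI : NeZero d := ⟨hd0.ne'⟩
  have := ZMod.val_lt m
  rw [iota, ZMod.val_natCast, Nat.mod_eq_of_lt (by omega)]

lemma iota_inj (hd0 : 0 < d) {m m' : ZMod d} (h : iota d m = iota d m') : m = m' := by
  haveI : NeZero d := ⟨hd0.ne'⟩
  have h1 := iota_val hd0 m
  have h2 := iota_val hd0 m'
  rw [h] at h1
  exact ZMod.val_injective _ (by omega)

lemma iota_ne_zero (hd0 : 0 < d) (m : ZMod d) : iota d m ≠ 0 := by
  intro h
  have := iota_val hd0 m
  rw [h, ZMod.val_zero] at this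
  omega

lemma exists_iota (hd0 : 0 < d) {i : ZMod (d + 1)} (hi : i ≠ 0) : ∃ m, i = iota d m := by
  haveI : NeZero d := ⟨hd0.ne'⟩
  refine ⟨((i.val - 1 : ℕ) : ZMod d), ?_⟩
  have hv : i.val ≠ 0 := fun h => hi (by rwa [← ZMod.val_eq_zero])
  have hlt : i.val < d + 1 := ZMod.val_lt i
  have : (((i.val - 1 : ℕ) : ZMod d)).val = i.val - 1 := by
    rw [ZMod.val_natCast, Nat.mod_eq_of_lt (by omega)]
  rw [iota, this]
  have : i.val - 1 + 1 = i.val := by omega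
  rw [this, ZMod.natCast_val, ZMod.cast_id]

lemma sIdx_zero : sIdx d 0 = 0 := if_pos rfl

lemma sIdx_iota (hd0 : 0 < d) (m : ZMod d) : sIdx d (iota d m) = iota d (m + 1) := by
  haveI : NeZero d := ⟨hd0.ne'⟩
  have hv := iota_val hd0 m
  have hmlt := ZMod.val_lt m
  have hdval : ((d : ZMod (d+1))).val = d := by
    rw [ZMod.val_natCast, Nat.mod_eq_of_lt (by omega)]
  have hadd : (m + 1 : ZMod d) = ((m.val + 1 : ℕ) : ZMod d) := by
    push_cast [ZMod.natCast_val, ZMod.cast_id]; ring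
  rw [sIdx, if_neg (iota_ne_zero hd0 m)]
  by_cases hcase : m.val + 1 = d
  · rw [if_pos (by apply ZMod.val_injective; rw [hv, hdval, hcase])]
    rw [hadd, iota, ZMod.val_natCast, hcase, Nat.mod_self]
    norm_num
  · rw [if_neg (by intro h; apply hcase; rw [← hv, h, hdval])]
    rw [hadd, iota, iota, ZMod.val_natCast, Nat.mod_eq_of_lt (by omega)]
    push_cast; ring

lemma neg_iota (hd0 : 0 < d) (m : ZMod d) : -(iota d m) = iota d (-1 - m) := by
  haveI : NeZero d := ⟨hd0.ne'⟩
  have hmlt := ZMod.val_lt m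
  have hval : (-1 - m : ZMod d) = ((d - 1 - m.val : ℕ) : ZMod d) := by
    rw [Nat.cast_sub (by omega : m.val ≤ d - 1), Nat.cast_sub (by omega : 1 ≤ d),
      ZMod.natCast_self, ZMod.natCast_val, ZMod.cast_id]
    ring
  have hval2 : (-1 - m : ZMod d).val = d - 1 - m.val := by
    rw [hval, ZMod.val_natCast, Nat.mod_eq_of_lt (by omega)]
  rw [iota, iota, hval2, neg_eq_iff_add_eq_zero]
  rw [← Nat.cast_add]
  have : (m.val + 1) + (d - 1 - m.val + 1) = d + 1 := by omega
  rw [this, ZMod.natCast_self]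

/-- `τ` with starting index parameterized by `ZMod d`. -/
def tauZ (d j : ℕ) (κ : ZMod d) : Finset (VtxA d) :=
  (Finset.range d).image fun t => (iota d (κ + (t : ℕ)), decide (t < j))

lemma mem_tauZ {j : ℕ} {κ : ZMod d} {v : VtxA d} :
    v ∈ tauZ d j κ ↔ ∃ t, t < d ∧ v = (iota d (κ + (t : ℕ)), decide (t < j)) := by
  simp [tauZ, Finset.mem_image, Finset.mem_range, eq_comm]

lemma tauA_eq_tauZ (hd0 : 0 < d) {j k : ℕ} (hk : 1 ≤ k) :
    tauA d j k = tauZ d j ((k - 1 : ℕ) : ZMod d) := by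
  haveI : NeZero d := ⟨hd0.ne'⟩
  unfold tauA tauZ
  apply Finset.image_congr
  intro t _
  have h1 : ((k - 1 : ℕ) : ZMod d) + (t : ℕ) = ((k - 1 + t : ℕ) : ZMod d) := by push_cast; ring
  have h2 : k + t - 1 = k - 1 + t := by omega
  dsimp only
  rw [h1, iota, ZMod.val_natCast, h2]

lemma mem_GammaA_iff (hd0 : 0 < d) {j : ℕ} {F : Finset (VtxA d)} :
    F ∈ GammaA d j ↔ ∃ κ : ZMod d, F ⊆ tauZ d j κ := by
  haveI : NeZero d := ⟨hd0.ne'⟩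
  constructor
  · rintro ⟨k, hk1, hk2, hsub⟩
    exact ⟨((k - 1 : ℕ) : ZMod d), by rwa [tauA_eq_tauZ hd0 hk1] at hsub⟩
  · rintro ⟨κ, hsub⟩
    refine ⟨κ.val + 1, by omega, by have := ZMod.val_lt κ; omega, ?_⟩
    rw [tauA_eq_tauZ hd0 (by omega)]
    simpa [ZMod.natCast_val, ZMod.cast_id] using hsub

section perms
variable (gA gR gS : Equiv.Perm (VtxA d))
variable (hgA : ∀ v : VtxA d, gA v = (v.1, !v.2))
variable (hgR : ∀ v : VtxA d, gR v = (-v.1, v.2))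
variable (hgS : ∀ v : VtxA d, gS v = (sIdx d v.1, v.2))

include hgS in
lemma image_gS_tauZ (hd0 : 0 < d) (j : ℕ) (κ : ZMod d) :
    (tauZ d j κ).image ⇑gS = tauZ d j (κ + 1) := by
  unfold tauZ
  rw [Finset.image_image]
  apply Finset.image_congr
  intro t _
  simp only [Function.comp_apply, hgS, sIdx_iota hd0]
  congr 2
  ring

include hgR in
lemma image_gR_tauZ (hd0 : 0 < d) {j : ℕ} (hj : j ≤ d) (κ : ZMod d) :
    (tauZ d j κ).image ⇑gR = tauZ d j (-κ - (j : ZMod d)) := by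
  ext v
  simp only [Finset.mem_image, mem_tauZ]
  constructor
  · rintro ⟨w, ⟨t, ht, rfl⟩, rfl⟩
    rw [hgR]
    by_cases h : t < j
    · refine ⟨j - 1 - t, by omega, ?_⟩
      simp only [neg_iota hd0]
      rw [Prod.mk.injEq]
      refine ⟨?_, by simp only [decide_eq_decide]; omega⟩
      · congr 1
        rw [Nat.cast_sub (by omega : t ≤ j - 1), Nat.cast_sub (by omega : 1 ≤ j)]
        push_cast; ring
    · refine ⟨j + d - 1 - t, by omega, ?_⟩
      simp only [neg_iota hd0]
      rw [Prod.mk.injEq]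
      refine ⟨?_, by simp only [decide_eq_decide]; omega⟩
      · congr 1
        rw [Nat.cast_sub (by omega : t ≤ j + d - 1), Nat.cast_sub (by omega : 1 ≤ j + d)]
        push_cast [ZMod.natCast_self]; ring
  · rintro ⟨t', ht', rfl⟩
    by_cases h : t' < j
    · refine ⟨(iota d (κ + (j - 1 - t' : ℕ)), decide ((j - 1 - t') < j)), ⟨j - 1 - t', by omega, rfl⟩, ?_⟩
      rw [hgR]
      simp only [neg_iota hd0]
      rw [Prod.mk.injEq]
      refine ⟨?_, by simp only [decide_eq_decide]; omega⟩
      · congr 1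
        rw [Nat.cast_sub (by omega : t' ≤ j - 1), Nat.cast_sub (by omega : 1 ≤ j)]
        push_cast; ring
    · refine ⟨(iota d (κ + (j + d - 1 - t' : ℕ)), decide ((j + d - 1 - t') < j)), ⟨j + d - 1 - t', by omega, rfl⟩, ?_⟩
      rw [hgR]
      simp only [neg_iota hd0]
      rw [Prod.mk.injEq]
      refine ⟨?_, by simp only [decide_eq_decide]; omega⟩
      · congr 1
        rw [Nat.cast_sub (by omega : t' ≤ j + d - 1), Nat.cast_sub (by omega : 1 ≤ j + d)]
        push_cast [ZMod.natCast_self]; ring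

include hgA in
lemma image_gA_tauZ (hd0 : 0 < d) {j : ℕ} (hj : j ≤ d) (κ : ZMod d) :
    (tauZ d j κ).image ⇑gA = tauZ d (d - j) (κ + (j : ZMod d)) := by
  ext v
  simp only [Finset.mem_image, mem_tauZ]
  constructor
  · rintro ⟨w, ⟨t, ht, rfl⟩, rfl⟩
    rw [hgA]
    by_cases h : t < j
    · refine ⟨t + (d - j), by omega, ?_⟩
      rw [Prod.mk.injEq]
      refine ⟨?_, by simp only [← decide_not, decide_eq_decide]; omega⟩
      · congr 1
        rw [Nat.cast_add, Nat.cast_sub hj]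
        push_cast [ZMod.natCast_self]; ring
    · refine ⟨t - j, by omega, ?_⟩
      rw [Prod.mk.injEq]
      refine ⟨?_, by simp only [← decide_not, decide_eq_decide]; omega⟩
      · congr 1
        rw [Nat.cast_sub (by omega : j ≤ t)]
        push_cast; ring
  · rintro ⟨t', ht', rfl⟩
    by_cases h : t' < d - j
    · refine ⟨(iota d (κ + (t' + j : ℕ)), decide ((t' + j) < j)), ⟨t' + j, by omega, rfl⟩, ?_⟩
      rw [hgA]
      rw [Prod.mk.injEq]
      refine ⟨?_, by simp only [← decide_not, decide_eq_decide]; omega⟩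
      · congr 1; push_cast; ring
    · refine ⟨(iota d (κ + (t' + j - d : ℕ)), decide ((t' + j - d) < j)), ⟨t' + j - d, by omega, rfl⟩, ?_⟩
      rw [hgA]
      rw [Prod.mk.injEq]
      refine ⟨?_, by simp only [← decide_not, decide_eq_decide]; omega⟩
      · congr 1
        rw [Nat.cast_sub (by omega : d ≤ t' + j)]
        push_cast [ZMod.natCast_self]; ring

end perms

section general
variable {α : Type*} [DecidableEq α]



lemma image_image_inv (g : Equiv.Perm α) (F : Finset α) : (F.image ⇑g⁻¹).image ⇑g = F := by
  rw [Finset.image_image]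
  simp [Function.comp_def]

lemma image_inv_image (g : Equiv.Perm α) (F : Finset α) : (F.image ⇑g).image ⇑g⁻¹ = F := by
  rw [Finset.image_image]
  simp [Function.comp_def]

lemma preserve_pow {g : Equiv.Perm α} {K : Set (Finset α)}
    (h : ∀ H ∈ K, H.image ⇑g ∈ K) (n : ℕ) : ∀ H ∈ K, H.image ⇑(g ^ n) ∈ K := by
  induction n with
  | zero => intro H hH; simpa using hH
  | succ n ih =>
      intro H hH
      have : (⇑(g ^ (n+1)) : α → α) = ⇑(g ^ n) ∘ ⇑g := by
        funext v; simp [pow_succ, Equiv.Perm.mul_apply]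
      rw [this, ← Finset.image_image]
      exact ih _ (h H hH)

/-- if `g` and `g⁻¹` both map `K` into itself then the image of `K` is `K`. -/
lemma image_setK_eq {g : Equiv.Perm α} {K : Set (Finset α)}
    (h : ∀ H ∈ K, H.image ⇑g ∈ K) (h' : ∀ H ∈ K, H.image ⇑g⁻¹ ∈ K) :
    (fun F : Finset α => F.image ⇑g) '' K = K := by
  apply Set.Subset.antisymm
  · rintro _ ⟨H, hH, rfl⟩; exact h H hH
  · intro H hH
    exact ⟨H.image ⇑g⁻¹, h' H hH, image_image_inv g H⟩

lemma mem_iff_of_image_eq {g : Equiv.Perm α} {K : Set (Finset α)}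
    (hK : (fun F : Finset α => F.image ⇑g) '' K = K) (F : Finset α) :
    F ∈ K ↔ F.image ⇑g ∈ K := by
  constructor
  · intro h; rw [← hK]; exact ⟨F, h, rfl⟩
  · intro h
    rw [← hK] at h
    obtain ⟨G, hG, hGF⟩ := h
    have : G = F := by
      have := congrArg (Finset.image ⇑g⁻¹) hGF
      rwa [image_inv_image, image_inv_image] at this
    rwa [← this]

lemma mem_iff_inv {g : Equiv.Perm α} {K : Set (Finset α)}
    (hK : (fun F : Finset α => F.image ⇑g) '' K = K) (F : Finset α) :
    F ∈ K ↔ F.image ⇑g⁻¹ ∈ K := by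
  rw [mem_iff_of_image_eq hK (F.image ⇑g⁻¹), image_image_inv]

lemma bdry_image_mem {g : Equiv.Perm α} {K : Set (Finset α)}
    (hK : (fun F : Finset α => F.image ⇑g) '' K = K) {n : ℕ} {F : Finset α}
    (hF : F ∈ bdry n K) : F.image ⇑g ∈ bdry n K := by
  obtain ⟨F', hF'K, hcard, ⟨T, ⟨hTfac, hFT⟩, huniq⟩, hsub⟩ := hF
  refine ⟨F'.image ⇑g, (mem_iff_of_image_eq hK F').mp hF'K,
    by rw [Finset.card_image_of_injective _ g.injective]; exact hcard, ?_, Finset.image_subset_image hsub⟩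
  refine ⟨T.image ⇑g, ⟨⟨(mem_iff_of_image_eq hK T).mp hTfac.1, ?_⟩, Finset.image_subset_image hFT⟩, ?_⟩
  · intro G hG hTG
    have hGinv : G.image ⇑g⁻¹ ∈ K := (mem_iff_inv hK G).mp hG
    have hTGinv : T ⊆ G.image ⇑g⁻¹ := by
      intro x hx
      have : g x ∈ G := hTG (Finset.mem_image_of_mem _ hx)
      have : g⁻¹ (g x) ∈ G.image ⇑g⁻¹ := Finset.mem_image_of_mem _ this
      simpa using this
    have := hTfac.2 _ hGinv hTGinv
    rw [this, image_image_inv]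
  · rintro T' ⟨hT'fac, hFT'⟩
    have h1 : T'.image ⇑g⁻¹ ∈ K := (mem_iff_inv hK T').mp hT'fac.1
    have h2 : IsFacetOf K (T'.image ⇑g⁻¹) := by
      refine ⟨h1, ?_⟩
      intro G hG hsub2
      have hGg : G.image ⇑g ∈ K := (mem_iff_of_image_eq hK G).mp hG
      have : T' ⊆ G.image ⇑g := by
        intro x hx
        have : g⁻¹ x ∈ T'.image ⇑g⁻¹ := Finset.mem_image_of_mem _ hx
        have := hsub2 this
        have : g (g⁻¹ x) ∈ G.image ⇑g := Finset.mem_image_of_mem _ this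
        simpa using this
      have := hT'fac.2 _ hGg this
      rw [this, image_inv_image]
    have h3 : F' ⊆ T'.image ⇑g⁻¹ := by
      intro x hx
      have : g x ∈ T' := hFT' (Finset.mem_image_of_mem _ hx)
      have : g⁻¹ (g x) ∈ T'.image ⇑g⁻¹ := Finset.mem_image_of_mem _ this
      simpa using this
    have := huniq _ ⟨h2, h3⟩
    have := congrArg (Finset.image ⇑g) this
    rwa [image_image_inv] at this

lemma bdry_image_eq {g : Equiv.Perm α} {K : Set (Finset α)}
    (hK : (fun F : Finset α => F.image ⇑g) '' K = K) (n : ℕ) :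
    (fun F : Finset α => F.image ⇑g) '' bdry n K = bdry n K := by
  apply Set.Subset.antisymm
  · rintro _ ⟨F, hF, rfl⟩; exact bdry_image_mem hK hF
  · intro F hF
    have hKinv : (fun F : Finset α => F.image ⇑g⁻¹) '' K = K := by
      apply Set.Subset.antisymm
      · rintro _ ⟨H, hH, rfl⟩; exact (mem_iff_inv hK H).mp hH
      · intro H hH
        exact ⟨H.image ⇑g, (mem_iff_of_image_eq hK H).mp hH, image_inv_image g H⟩
    exact ⟨F.image ⇑g⁻¹, bdry_image_mem hKinv hF, image_image_inv g F⟩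


end general


section preserve
variable (gA gR gS : Equiv.Perm (VtxA d))
variable (hgA : ∀ v : VtxA d, gA v = (v.1, !v.2))
variable (hgR : ∀ v : VtxA d, gR v = (-v.1, v.2))
variable (hgS : ∀ v : VtxA d, gS v = (sIdx d v.1, v.2))

lemma coneC_mem_image (g : Equiv.Perm (VtxA d)) {B B' : Set (Finset (VtxA d))} {w w' : VtxA d}
    (hB : ∀ F ∈ B, F.image ⇑g ∈ B') (hw : g w = w') :
    ∀ H ∈ coneC B w, H.image ⇑g ∈ coneC B' w' := by
  rintro _ ⟨G, hG, s, hs, rfl⟩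
  refine ⟨G.image ⇑g, hB _ hG, s.image ⇑g, ?_, Finset.image_union _ _⟩
  intro x hx
  simp only [Finset.mem_image] at hx
  obtain ⟨y, hy, rfl⟩ := hx
  have := hs hy
  simp only [Finset.mem_singleton] at this ⊢
  rw [this, hw]

include hgS in
lemma image_gS_Gamma (hd0 : 0 < d) {j : ℕ} {F : Finset (VtxA d)}
    (hF : F ∈ GammaA d j) : F.image ⇑gS ∈ GammaA d j := by
  rw [mem_GammaA_iff hd0] at hF ⊢
  obtain ⟨κ, hκ⟩ := hF
  exact ⟨κ + 1, by rw [← image_gS_tauZ gS hgS hd0]; exact Finset.image_subset_image hκ⟩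

include hgR in
lemma image_gR_Gamma (hd0 : 0 < d) {j : ℕ} (hj : j ≤ d) {F : Finset (VtxA d)}
    (hF : F ∈ GammaA d j) : F.image ⇑gR ∈ GammaA d j := by
  rw [mem_GammaA_iff hd0] at hF ⊢
  obtain ⟨κ, hκ⟩ := hF
  exact ⟨-κ - (j : ZMod d), by rw [← image_gR_tauZ gR hgR hd0 hj]; exact Finset.image_subset_image hκ⟩

include hgA in
lemma image_gA_Gamma (hd0 : 0 < d) {j : ℕ} (hj : j ≤ d) {F : Finset (VtxA d)}
    (hF : F ∈ GammaA d j) : F.image ⇑gA ∈ GammaA d (d - j) := by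
  rw [mem_GammaA_iff hd0] at hF ⊢
  obtain ⟨κ, hκ⟩ := hF
  exact ⟨κ + (j : ZMod d), by rw [← image_gA_tauZ gA hgA hd0 hj]; exact Finset.image_subset_image hκ⟩

include hgS in
lemma image_gS_K (hd : 5 ≤ d) (hodd : d % 2 = 1) :
    ∀ H ∈ D1A d ∪ D2A d, H.image ⇑gS ∈ D1A d ∪ D2A d := by
  have hapex : (((d + 1 : ℕ) : ZMod (d + 1))) = 0 := ZMod.natCast_self _
  intro H hH
  rcases hH with h | h
  · left
    refine coneC_mem_image gS (fun F hF => ?_) ?_ H h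
    · rw [B1A, if_pos hodd] at hF ⊢
      obtain ⟨k, hk, hG⟩ := hF
      exact ⟨k, hk, image_gS_Gamma gS hgS (by omega) hG⟩
    · rw [hgS]; simp [hapex, sIdx_zero]
  · right
    refine coneC_mem_image gS (fun F hF => ?_) ?_ H h
    · rw [B2A, if_pos hodd] at hF ⊢
      obtain ⟨k, hk1, hk2, hG⟩ := hF
      exact ⟨k, hk1, hk2, image_gS_Gamma gS hgS (by omega) hG⟩
    · rw [hgS]; simp [hapex, sIdx_zero]

include hgR in
lemma image_gR_K (hd : 5 ≤ d) (hodd : d % 2 = 1) :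
    ∀ H ∈ D1A d ∪ D2A d, H.image ⇑gR ∈ D1A d ∪ D2A d := by
  have hapex : (((d + 1 : ℕ) : ZMod (d + 1))) = 0 := ZMod.natCast_self _
  intro H hH
  rcases hH with h | h
  · left
    refine coneC_mem_image gR (fun F hF => ?_) ?_ H h
    · rw [B1A, if_pos hodd] at hF ⊢
      obtain ⟨k, hk, hG⟩ := hF
      exact ⟨k, hk, image_gR_Gamma gR hgR (by omega) (by omega) hG⟩
    · rw [hgR]; simp [hapex]
  · right
    refine coneC_mem_image gR (fun F hF => ?_) ?_ H h
    · rw [B2A, if_pos hodd] at hF ⊢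
      obtain ⟨k, hk1, hk2, hG⟩ := hF
      exact ⟨k, hk1, hk2, image_gR_Gamma gR hgR (by omega) (by omega) hG⟩
    · rw [hgR]; simp [hapex]

include hgA in
lemma image_gA_K (hd : 5 ≤ d) (hodd : d % 2 = 1) :
    ∀ H ∈ D1A d ∪ D2A d, H.image ⇑gA ∈ D1A d ∪ D2A d := by
  have hapex : (((d + 1 : ℕ) : ZMod (d + 1))) = 0 := ZMod.natCast_self _
  intro H hH
  rcases hH with h | h
  · right
    refine coneC_mem_image gA (fun F hF => ?_) ?_ H h
    · rw [B1A, if_pos hodd] at hF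
      rw [B2A, if_pos hodd]
      obtain ⟨k, hk, hG⟩ := hF
      have hkd : k ≤ d := by omega
      exact ⟨d - k, by omega, by omega, image_gA_Gamma gA hgA (by omega) hkd hG⟩
    · rw [hgA]; simp [hapex]
  · left
    refine coneC_mem_image gA (fun F hF => ?_) ?_ H h
    · rw [B2A, if_pos hodd] at hF
      rw [B1A, if_pos hodd]
      obtain ⟨k, hk1, hk2, hG⟩ := hF
      exact ⟨d - k, by omega, image_gA_Gamma gA hgA (by omega) hk2 hG⟩
    · rw [hgA]; simp [hapex]

include hgA in
lemma gA_sq : gA * gA = 1 := by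
  apply Equiv.ext
  intro v
  rw [Equiv.Perm.mul_apply, hgA, hgA]
  simp

include hgR in
lemma gR_sq : gR * gR = 1 := by
  apply Equiv.ext
  intro v
  rw [Equiv.Perm.mul_apply, hgR, hgR]
  simp

include hgS in
lemma gS_pow_apply_iota (hd0 : 0 < d) (n : ℕ) (m : ZMod d) (b : Bool) :
    (gS ^ n) (iota d m, b) = (iota d (m + (n : ZMod d)), b) := by
  induction n generalizing m with
  | zero => simp
  | succ n ih =>
      rw [pow_succ, Equiv.Perm.mul_apply, hgS]
      dsimp only
      rw [sIdx_iota hd0, ih]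
      congr 2
      push_cast; ring

include hgS in
lemma gS_pow_apply_zero (n : ℕ) (b : Bool) :
    (gS ^ n) ((0 : ZMod (d + 1)), b) = (0, b) := by
  induction n with
  | zero => simp
  | succ n ih =>
      rw [pow_succ, Equiv.Perm.mul_apply, hgS]
      dsimp only
      rw [sIdx_zero, ih]

include hgS in
lemma gS_pow_d (hd0 : 0 < d) : gS ^ d = 1 := by
  apply Equiv.ext
  rintro ⟨p, b⟩
  by_cases hp : p = 0
  · subst hp
    rw [gS_pow_apply_zero gS hgS]
    simp
  · obtain ⟨m, rfl⟩ := exists_iota hd0 hp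
    rw [gS_pow_apply_iota gS hgS hd0]
    simp [ZMod.natCast_self]

lemma K_subset_struct (hd : 5 ≤ d) (hodd : d % 2 = 1) {H : Finset (VtxA d)}
    (hH : H ∈ D1A d ∪ D2A d) :
    ∃ (j : ℕ) (κ : ZMod d) (b : Bool), H ⊆ tauZ d j κ ∪ {((0 : ZMod (d + 1)), b)} := by
  have hapex : (((d + 1 : ℕ) : ZMod (d + 1))) = 0 := ZMod.natCast_self _
  have hd0 : 0 < d := by omega
  rcases hH with h | h
  · obtain ⟨G, hG, s, hs, rfl⟩ := h
    rw [B1A, if_pos hodd] at hG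
    obtain ⟨k, _, hGk⟩ := hG
    obtain ⟨κ, hκ⟩ := (mem_GammaA_iff hd0).mp hGk
    refine ⟨k, κ, false, ?_⟩
    rw [hapex] at hs
    exact Finset.union_subset (hκ.trans Finset.subset_union_left)
      (hs.trans Finset.subset_union_right)
  · obtain ⟨G, hG, s, hs, rfl⟩ := h
    rw [B2A, if_pos hodd] at hG
    obtain ⟨k, _, _, hGk⟩ := hG
    obtain ⟨κ, hκ⟩ := (mem_GammaA_iff hd0).mp hGk
    refine ⟨k, κ, true, ?_⟩
    rw [hapex] at hs
    exact Finset.union_subset (hκ.trans Finset.subset_union_left)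
      (hs.trans Finset.subset_union_right)

lemma K_fst_inj (hd : 5 ≤ d) (hodd : d % 2 = 1) {H : Finset (VtxA d)}
    (hH : H ∈ D1A d ∪ D2A d) :
    ∀ v ∈ H, ∀ w ∈ H, v.1 = w.1 → v = w := by
  have hd0 : 0 < d := by omega
  obtain ⟨j, κ, b, hsub⟩ := K_subset_struct hd hodd hH
  intro v hv w hw h1
  have hv' := hsub hv
  have hw' := hsub hw
  rcases Finset.mem_union.mp hv' with hv1 | hv1 <;>
    rcases Finset.mem_union.mp hw' with hw1 | hw1
  · obtain ⟨t1, ht1, rfl⟩ := mem_tauZ.mp hv1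
    obtain ⟨t2, ht2, rfl⟩ := mem_tauZ.mp hw1
    simp only at h1
    have := iota_inj hd0 h1
    have h2 : ((t1 : ℕ) : ZMod d) = ((t2 : ℕ) : ZMod d) := by
      have := add_left_cancel this
      exact this
    have h3 : t1 % d = t2 % d := by
      haveI : NeZero d := ⟨hd0.ne'⟩
      have e1 := ZMod.val_natCast (n := d) t1
      have e2 := ZMod.val_natCast (n := d) t2
      rw [← e1, ← e2, h2]
    rw [Nat.mod_eq_of_lt ht1, Nat.mod_eq_of_lt ht2] at h3
    subst h3
    rfl
  · exfalso
    obtain ⟨t1, _, rfl⟩ := mem_tauZ.mp hv1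
    rw [Finset.mem_singleton] at hw1
    subst hw1
    exact iota_ne_zero hd0 _ h1
  · exfalso
    obtain ⟨t2, _, rfl⟩ := mem_tauZ.mp hw1
    rw [Finset.mem_singleton] at hv1
    subst hv1
    exact iota_ne_zero hd0 _ h1.symm
  · rw [Finset.mem_singleton] at hv1 hw1
    rw [hv1, hw1]

end preserve


section grouptheory

lemma pow_dvd_eq_one {G : Type*} [Group G] {g : G} {N a : ℕ} (hg : g ^ N = 1) (h : N ∣ a) :
    g ^ a = 1 := by
  obtain ⟨c, rfl⟩ := h
  rw [pow_mul, hg, one_pow]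

lemma pow_val_add {G : Type*} [Group G] {g : G} {N : ℕ} (hN0 : 0 < N) (hg : g ^ N = 1)
    (u v : ZMod N) : g ^ (u + v).val = g ^ u.val * g ^ v.val := by
  haveI : NeZero N := ⟨hN0.ne'⟩
  rw [ZMod.val_add, ← pow_add]
  conv_rhs => rw [← Nat.div_add_mod (u.val + v.val) N]
  rw [pow_add, pow_mul, hg, one_pow, one_mul]

lemma pow_val_neg {G : Type*} [Group G] {g : G} {N : ℕ} (hN0 : 0 < N) (hg : g ^ N = 1)
    (u : ZMod N) : (g ^ u.val)⁻¹ = g ^ (-u).val := by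
  haveI : NeZero N := ⟨hN0.ne'⟩
  apply inv_eq_of_mul_eq_one_right
  rw [← pow_add]
  apply pow_dvd_eq_one hg
  have h := (ZMod.val_add u (-u)).symm
  rw [add_neg_cancel, ZMod.val_zero] at h
  exact Nat.dvd_of_mod_eq_zero h

variable {d : ℕ} (gA gR gS : Equiv.Perm (VtxA d))

/-- map from the dihedral group. -/
def fD : DihedralGroup d → Equiv.Perm (VtxA d)
  | .r i => gS ^ (-i).val
  | .sr i => gS ^ (i + 1).val * gR

variable (hgA : ∀ v : VtxA d, gA v = (v.1, !v.2))
variable (hgR : ∀ v : VtxA d, gR v = (-v.1, v.2))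
variable (hgS : ∀ v : VtxA d, gS v = (sIdx d v.1, v.2))

include hgR hgS in
lemma gR_gS_conj (hd0 : 0 < d) : gR * gS = gS⁻¹ * gR := by
  rw [eq_inv_mul_iff_mul_eq, ← mul_assoc]
  apply Equiv.ext
  rintro ⟨p, b⟩
  rw [Equiv.Perm.mul_apply, Equiv.Perm.mul_apply]
  by_cases hp : p = 0
  · subst hp
    have e1 : gS ((0 : ZMod (d + 1)), b) = (0, b) := by
      rw [hgS]; try dsimp only
      rw [sIdx_zero]
    have e2 : gR ((0 : ZMod (d + 1)), b) = (0, b) := by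
      rw [hgR]; try dsimp only
      rw [neg_zero]
    rw [e1, e2, e1]
  · obtain ⟨m, rfl⟩ := exists_iota hd0 hp
    have eS : ∀ m' : ZMod d, gS (iota d m', b) = (iota d (m' + 1), b) := fun m' => by
      rw [hgS]; try dsimp only
      rw [sIdx_iota hd0]
    have eR : ∀ m' : ZMod d, gR (iota d m', b) = (iota d (-1 - m'), b) := fun m' => by
      rw [hgR]; try dsimp only
      rw [neg_iota hd0]
    rw [eS, eR, eS, eR]
    congr 2
    ring

include hgR hgS in
lemma gR_gS_pow (hd0 : 0 < d) (n : ℕ) : gR * gS ^ n = gS⁻¹ ^ n * gR := by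
  induction n with
  | zero => simp
  | succ n ih =>
      rw [pow_succ, ← mul_assoc, ih, mul_assoc, gR_gS_conj gR gS hgR hgS hd0,
        ← mul_assoc, ← pow_succ]

include hgR hgS in
lemma gR_gS_swap (hd0 : 0 < d) (u : ZMod d) :
    gR * gS ^ u.val = gS ^ (-u).val * gR := by
  rw [gR_gS_pow gR gS hgR hgS hd0, inv_pow, pow_val_neg hd0 (gS_pow_d gS hgS hd0)]

include hgR hgS in
lemma fD_mul (hd0 : 0 < d) (x y : DihedralGroup d) :
    fD gR gS (x * y) = fD gR gS x * fD gR gS y := by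
  have hpd := gS_pow_d gS hgS hd0
  have hadd : ∀ u v : ZMod d, gS ^ (u + v).val = gS ^ u.val * gS ^ v.val :=
    fun u v => pow_val_add hd0 hpd u v
  have hswap : ∀ u : ZMod d, gR * gS ^ u.val = gS ^ (-u).val * gR :=
    fun u => gR_gS_swap gR gS hgR hgS hd0 u
  cases x with
  | r i =>
      cases y with
      | r j =>
          rw [DihedralGroup.r_mul_r]
          show gS ^ (-(i + j)).val = gS ^ (-i).val * gS ^ (-j).val
          rw [neg_add, hadd]
      | sr j =>
          rw [DihedralGroup.r_mul_sr]
          show gS ^ (j - i + 1).val * gR = gS ^ (-i).val * (gS ^ (j + 1).val * gR)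
          rw [← mul_assoc, ← hadd]
          have : (-i + (j + 1) : ZMod d) = j - i + 1 := by ring
          rw [this]
  | sr i =>
      cases y with
      | r j =>
          rw [DihedralGroup.sr_mul_r]
          show gS ^ (i + j + 1).val * gR = gS ^ (i + 1).val * gR * gS ^ (-j).val
          rw [mul_assoc, hswap, neg_neg, ← mul_assoc, ← hadd]
          have : (i + 1 + j : ZMod d) = i + j + 1 := by ring
          rw [this]
      | sr j =>
          rw [DihedralGroup.sr_mul_sr]
          show gS ^ (-(j - i)).val = gS ^ (i + 1).val * gR * (gS ^ (j + 1).val * gR)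
          rw [mul_assoc, ← mul_assoc gR, hswap, mul_assoc, gR_sq gR hgR, mul_one,
            ← hadd]
          have : (i + 1 + -(j + 1) : ZMod d) = -(j - i) := by ring
          rw [this]

include hgA hgS in
lemma gA_gS_comm : Commute gA gS := by
  show gA * gS = gS * gA
  apply Equiv.ext
  intro v
  rw [Equiv.Perm.mul_apply, Equiv.Perm.mul_apply, hgA, hgS, hgS, hgA]

include hgA hgR in
lemma gA_gR_comm : Commute gA gR := by
  show gA * gR = gR * gA
  apply Equiv.ext
  intro v
  rw [Equiv.Perm.mul_apply, Equiv.Perm.mul_apply, hgA, hgR, hgR, hgA]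

include hgA hgR hgS in
lemma gA_fD_comm (x : DihedralGroup d) : Commute gA (fD gR gS x) := by
  cases x with
  | r i => exact (gA_gS_comm gA gS hgA hgS).pow_right _
  | sr i =>
      exact Commute.mul_right ((gA_gS_comm gA gS hgA hgS).pow_right _)
        (gA_gR_comm gA gR hgA hgR)

/-- the homomorphism candidate. -/
def Phi0 (p : Multiplicative (ZMod 2) × DihedralGroup d) : Equiv.Perm (VtxA d) :=
  gA ^ (Multiplicative.toAdd p.1).val * fD gR gS p.2

include hgA hgR hgS in
lemma Phi0_mul (hd0 : 0 < d) (p q : Multiplicative (ZMod 2) × DihedralGroup d) :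
    Phi0 gA gR gS (p * q) = Phi0 gA gR gS p * Phi0 gA gR gS q := by
  obtain ⟨a, x⟩ := p
  obtain ⟨b, y⟩ := q
  have hA2 : gA ^ 2 = 1 := by rw [pow_two]; exact gA_sq gA hgA
  unfold Phi0
  dsimp only
  have h1 : (Multiplicative.toAdd (a * b)) = Multiplicative.toAdd a + Multiplicative.toAdd b :=
    rfl
  rw [Prod.mk_mul_mk]
  dsimp only
  rw [h1, pow_val_add (by norm_num) hA2, fD_mul gR gS hgR hgS hd0]
  have hc : Commute (gA ^ (Multiplicative.toAdd b).val) (fD gR gS x) :=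
    (gA_fD_comm gA gR gS hgA hgR hgS x).pow_left _
  rw [mul_assoc, ← mul_assoc (gA ^ (Multiplicative.toAdd b).val), hc.eq,
    mul_assoc (fD gR gS x), ← mul_assoc]

include hgR hgS in
lemma fD_apply_zero (x : DihedralGroup d) (b : Bool) :
    fD gR gS x ((0 : ZMod (d + 1)), b) = (0, b) := by
  cases x with
  | r i => exact gS_pow_apply_zero gS hgS _ b
  | sr i =>
      rw [fD, Equiv.Perm.mul_apply, hgR]
      dsimp only
      rw [neg_zero]
      exact gS_pow_apply_zero gS hgS _ b

include hgS in
lemma fD_r_apply (hd0 : 0 < d) (i m : ZMod d) (b : Bool) :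
    fD gR gS (.r i) (iota d m, b) = (iota d (m - i), b) := by
  haveI : NeZero d := ⟨hd0.ne'⟩
  rw [fD, gS_pow_apply_iota gS hgS hd0]
  congr 2
  rw [ZMod.natCast_val, ZMod.cast_id, sub_eq_add_neg]

include hgR hgS in
lemma fD_sr_apply (hd0 : 0 < d) (i m : ZMod d) (b : Bool) :
    fD gR gS (.sr i) (iota d m, b) = (iota d (i - m), b) := by
  haveI : NeZero d := ⟨hd0.ne'⟩
  rw [fD, Equiv.Perm.mul_apply, hgR]
  dsimp only
  rw [neg_iota hd0, gS_pow_apply_iota gS hgS hd0]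
  congr 2
  rw [ZMod.natCast_val, ZMod.cast_id]
  ring

include hgA hgR hgS in
lemma Phi0_inj (hd : 5 ≤ d) {p : Multiplicative (ZMod 2) × DihedralGroup d}
    (h : Phi0 gA gR gS p = 1) : p = 1 := by
  have hd0 : 0 < d := by omega
  haveI : NeZero d := ⟨hd0.ne'⟩
  obtain ⟨a, x⟩ := p
  unfold Phi0 at h
  dsimp only at h
  -- first coordinate must be trivial
  have ha : Multiplicative.toAdd a = 0 := by
    rcases (by decide : ∀ z : ZMod 2, z = 0 ∨ z = 1) (Multiplicative.toAdd a) with h' | h'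
    · exact h'
    · exfalso
      have h0 := congrArg (fun e : Equiv.Perm (VtxA d) => e ((0 : ZMod (d + 1)), false)) h
      rw [Equiv.Perm.mul_apply, fD_apply_zero gR gS hgR hgS, h',
        (by decide : (1 : ZMod 2).val = 1), pow_one, hgA] at h0
      simp at h0
  rw [ha, ZMod.val_zero, pow_zero, one_mul] at h
  have ha' : a = 1 := by
    rw [← ofAdd_toAdd a, ha, ofAdd_zero]
  cases x with
  | r i =>
      have h0 : fD gR gS (DihedralGroup.r i) (iota d 0, false) = (iota d 0, false) := by
        rw [h, Equiv.Perm.one_apply]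
      rw [fD_r_apply gR gS hgS hd0] at h0
      have h0' : iota d (0 - i) = iota d 0 := congrArg Prod.fst h0
      have e0 : (0 : ZMod d) - i = 0 := iota_inj hd0 h0'
      have hi : i = 0 := by
        have := e0
        rwa [zero_sub, neg_eq_zero] at this
      rw [ha', hi]
      rfl
  | sr i =>
      exfalso
      have h0 : fD gR gS (DihedralGroup.sr i) (iota d 0, false) = (iota d 0, false) := by
        rw [h, Equiv.Perm.one_apply]
      have h1 : fD gR gS (DihedralGroup.sr i) (iota d 1, false) = (iota d 1, false) := by
        rw [h, Equiv.Perm.one_apply]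
      rw [fD_sr_apply gR gS hgR hgS hd0] at h0 h1
      have e0 : i - 0 = (0 : ZMod d) := iota_inj hd0 (congrArg Prod.fst h0)
      have e1 : i - 1 = (1 : ZMod d) := iota_inj hd0 (congrArg Prod.fst h1)
      have h2 : (2 : ZMod d) = 0 := by
        have hi : i = 0 := by rwa [sub_zero] at e0
        rw [hi] at e1
        linear_combination -e1
      have h3 : (2 : ZMod d).val = 2 := by
        rw [show (2 : ZMod d) = ((2 : ℕ) : ZMod d) by push_cast; rfl, ZMod.val_natCast,
          Nat.mod_eq_of_lt (by omega)]
      rw [h2, ZMod.val_zero] at h3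
      omega

end grouptheory

/-- Let `d ≥ 5` be odd. Let `gA` be the antipodal permutation `α`
(`x_j ↦ y_j`, `y_j ↦ x_j`), let `gR` fix `x_{d+1}, y_{d+1}` and send `x_j ↦ x_{d-j+1}`,
`y_j ↦ y_{d-j+1}` (on residues: `i ↦ -i`), and let `gS` fix `x_{d+1}, y_{d+1}` and send
`x_j ↦ x_{j+1}`, `y_j ↦ y_{j+1}` (indices mod `d`). Then each of `gA, gR, gS` maps the face
set of `∂(D_1 ∪ D_2)` onto itself, `gA` acts freely on the (nonempty) faces, and the
subgroup of permutations generated by `gA, gR, gS` is isomorphic to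
`ℤ/2ℤ × 𝒟_d` (the dihedral group of order `2d`). -/
theorem statement13 (d : ℕ) (hd : 5 ≤ d) (hodd : d % 2 = 1)
    (gA gR gS : Equiv.Perm (VtxA d))
    (hgA : ∀ v : VtxA d, gA v = (v.1, !v.2))
    (hgR : ∀ v : VtxA d, gR v = (-v.1, v.2))
    (hgS : ∀ v : VtxA d, gS v = (sIdx d v.1, v.2)) :
    ((fun F : Finset (VtxA d) => F.image (⇑gA)) '' BD d = BD d) ∧
    ((fun F : Finset (VtxA d) => F.image (⇑gR)) '' BD d = BD d) ∧
    ((fun F : Finset (VtxA d) => F.image (⇑gS)) '' BD d = BD d) ∧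
    (∀ F ∈ BD d, F.Nonempty → F.image (⇑gA) ≠ F) ∧
    Nonempty ((Subgroup.closure ({gA, gR, gS} : Set (Equiv.Perm (VtxA d)))) ≃*
      Multiplicative (ZMod 2) × DihedralGroup d) := by
  have hd0 : 0 < d := by omega
  have hA1 := image_gA_K gA hgA hd hodd
  have hR1 := image_gR_K gR hgR hd hodd
  have hS1 := image_gS_K gS hgS hd hodd
  have hAinv : gA⁻¹ = gA := inv_eq_of_mul_eq_one_right (gA_sq gA hgA)
  have hRinv : gR⁻¹ = gR := inv_eq_of_mul_eq_one_right (gR_sq gR hgR)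
  have hSd : gS ^ d = 1 := gS_pow_d gS hgS hd0
  have hSinv : gS⁻¹ = gS ^ (d - 1) := by
    apply inv_eq_of_mul_eq_one_right
    rw [← pow_succ']
    have h' : d - 1 + 1 = d := by omega
    rw [h', hSd]
  have hKA : (fun F : Finset (VtxA d) => F.image ⇑gA) '' (D1A d ∪ D2A d) = D1A d ∪ D2A d :=
    image_setK_eq hA1 (fun H hH => by rw [hAinv]; exact hA1 H hH)
  have hKR : (fun F : Finset (VtxA d) => F.image ⇑gR) '' (D1A d ∪ D2A d) = D1A d ∪ D2A d :=
    image_setK_eq hR1 (fun H hH => by rw [hRinv]; exact hR1 H hH)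
  have hKS : (fun F : Finset (VtxA d) => F.image ⇑gS) '' (D1A d ∪ D2A d) = D1A d ∪ D2A d :=
    image_setK_eq hS1 (fun H hH => by rw [hSinv]; exact preserve_pow hS1 (d - 1) H hH)
  refine ⟨bdry_image_eq hKA d, bdry_image_eq hKR d, bdry_image_eq hKS d, ?_, ?_⟩
  · -- freeness of the antipodal map
    rintro F ⟨F', hF'K, -, -, hsub⟩ ⟨v, hv⟩ heq
    have hvim : gA v ∈ F.image ⇑gA := Finset.mem_image_of_mem _ hv
    rw [heq] at hvim
    have h3 : (gA v).1 = v.1 := by rw [hgA]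
    have h4 := K_fst_inj hd hodd hF'K _ (hsub hvim) _ (hsub hv) h3
    rw [hgA] at h4
    have h5 := congrArg Prod.snd h4
    simp at h5
  · -- the group generated by gA, gR, gS
    haveI : NeZero d := ⟨hd0.ne'⟩
    haveI : Fact (1 < d) := ⟨by omega⟩
    have hmul : ∀ p q, Phi0 gA gR gS (p * q) = Phi0 gA gR gS p * Phi0 gA gR gS q :=
      Phi0_mul gA gR gS hgA hgR hgS hd0
    let Φ : Multiplicative (ZMod 2) × DihedralGroup d →* Equiv.Perm (VtxA d) :=
      MonoidHom.mk' (Phi0 gA gR gS) hmul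
    have hinj : Function.Injective Φ :=
      (injective_iff_map_eq_one Φ).mpr fun p hp => Phi0_inj gA gR gS hgA hgR hgS hd hp
    have m1 : gA ∈ Φ.range := by
      refine ⟨(Multiplicative.ofAdd 1, 1), ?_⟩
      show Phi0 gA gR gS (Multiplicative.ofAdd 1, 1) = gA
      unfold Phi0
      dsimp only
      rw [DihedralGroup.one_def]
      show gA ^ (Multiplicative.toAdd (Multiplicative.ofAdd (1 : ZMod 2))).val *
        gS ^ ((-0 : ZMod d)).val = gA
      rw [toAdd_ofAdd, (by decide : (1 : ZMod 2).val = 1), pow_one, neg_zero,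
        ZMod.val_zero, pow_zero, mul_one]
    have m2 : gR ∈ Φ.range := by
      refine ⟨(1, DihedralGroup.sr (-1)), ?_⟩
      show Phi0 gA gR gS (1, DihedralGroup.sr (-1)) = gR
      unfold Phi0
      dsimp only
      show gA ^ (Multiplicative.toAdd (1 : Multiplicative (ZMod 2))).val *
        (gS ^ ((-1 + 1 : ZMod d)).val * gR) = gR
      rw [toAdd_one, ZMod.val_zero, pow_zero, one_mul, neg_add_cancel, ZMod.val_zero,
        pow_zero, one_mul]
    have m3 : gS ∈ Φ.range := by
      refine ⟨(1, DihedralGroup.r (-1)), ?_⟩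
      show Phi0 gA gR gS (1, DihedralGroup.r (-1)) = gS
      unfold Phi0
      dsimp only
      show gA ^ (Multiplicative.toAdd (1 : Multiplicative (ZMod 2))).val *
        gS ^ ((-(-1) : ZMod d)).val = gS
      rw [toAdd_one, ZMod.val_zero, pow_zero, one_mul, neg_neg, ZMod.val_one, pow_one]
    have hrange : Φ.range = Subgroup.closure ({gA, gR, gS} : Set (Equiv.Perm (VtxA d))) := by
      apply le_antisymm
      · rintro x ⟨⟨a, y⟩, rfl⟩
        have hAm : gA ∈ Subgroup.closure ({gA, gR, gS} : Set (Equiv.Perm (VtxA d))) :=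
          Subgroup.subset_closure (by simp)
        have hRm : gR ∈ Subgroup.closure ({gA, gR, gS} : Set (Equiv.Perm (VtxA d))) :=
          Subgroup.subset_closure (by simp)
        have hSm : gS ∈ Subgroup.closure ({gA, gR, gS} : Set (Equiv.Perm (VtxA d))) :=
          Subgroup.subset_closure (by simp)
        show Phi0 gA gR gS (a, y) ∈ _
        unfold Phi0
        apply mul_mem (pow_mem hAm _)
        cases y with
        | r i => exact pow_mem hSm _
        | sr i => exact mul_mem (pow_mem hSm _) hRm
      · rw [Subgroup.closure_le]
        rintro x hx
        simp only [Set.mem_insert_iff, Set.mem_singleton_iff] at hx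
        rcases hx with h | h | h
        · rw [h]; exact m1
        · rw [h]; exact m2
        · rw [h]; exact m3
    exact ⟨(MulEquiv.subgroupCongr hrange.symm).trans (MonoidHom.ofInjective hinj).symm⟩

end SpherePaper
end

section
/- Let d ≥ 2 and 1 ≤ i ≤ d−1. Then, as subcomplexes of ∂C_{d+1}^*, lk(x_{d+1}, B(i,d+1)) = st(x_d, B(i,d)) ∪ st(y_d, B(i−1,d)), where B(i,d) and B(i−1,d) are regarded as subcomplexes of ∂C_{d+1}^* supported on the vertices x_1,…,x_d, y_1,…,y_d. -/
namespace SpherePaper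

/-- Vertices of the cross-polytope boundaries: `(j, false)` is `x_j` and `(j, true)` is
`y_j`, for indices `j ≥ 1`. -/
abbrev V := ℕ × Bool

/-- The facet of `∂C_n^*` determined by the colour pattern `c : ℕ → Bool`: its vertex at
index `t` is `x_t` if `c t = false` and `y_t` if `c t = true`, for `1 ≤ t ≤ n`. -/
def csFacet (n : ℕ) (c : ℕ → Bool) : Finset V :=
  (Finset.range n).image fun t => ((t + 1 : ℕ), c (t + 1))

/-- The number of switches of the facet with colour pattern `c`: the number of positions
`t ∈ {1, …, n-1}` where `c t ≠ c (t+1)`. -/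
def switches (n : ℕ) (c : ℕ → Bool) : ℕ :=
  ((Finset.Ico 1 n).filter fun t => c t ≠ c (t + 1)).card

/-- `B(i,n)`: the subcomplex of `∂C_n^*` generated by all facets with at most `i`
switches. -/
def BSw (i n : ℕ) : Set (Finset V) :=
  {F | ∃ c : ℕ → Bool, switches n c ≤ i ∧ F ⊆ csFacet n c}

/-- The star `st(v, Δ) = {σ ∈ Δ : σ ∪ {v} ∈ Δ}`. -/
def starC (v : V) (C : Set (Finset V)) : Set (Finset V) :=
  {σ | σ ∈ C ∧ σ ∪ {v} ∈ C}

/-- The link `lk(v, Δ) = {σ ∈ Δ : v ∉ σ and σ ∪ {v} ∈ Δ}`. -/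
def linkC (v : V) (C : Set (Finset V)) : Set (Finset V) :=
  {σ | σ ∈ C ∧ v ∉ σ ∧ σ ∪ {v} ∈ C}

lemma mem_csFacet {n a : ℕ} {b : Bool} {c : ℕ → Bool} :
    ((a, b) : V) ∈ csFacet n c ↔ 1 ≤ a ∧ a ≤ n ∧ b = c a := by
  simp only [csFacet, Finset.mem_image, Finset.mem_range, Prod.mk.injEq]
  constructor
  · rintro ⟨t, ht, rfl, rfl⟩
    exact ⟨by omega, by omega, rfl⟩
  · rintro ⟨h1, h2, rfl⟩
    exact ⟨a - 1, by omega, by omega, by congr 1 <;> omega⟩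

lemma switches_congr {n : ℕ} {c c' : ℕ → Bool} (h : ∀ t, 1 ≤ t → t ≤ n → c t = c' t) :
    switches n c = switches n c' := by
  unfold switches
  congr 1
  apply Finset.filter_congr
  intro t ht
  simp only [Finset.mem_Ico] at ht
  rw [h t ht.1 (by omega), h (t + 1) (by omega) (by omega)]

lemma switches_succ {n : ℕ} (hn : 1 ≤ n) (c : ℕ → Bool) :
    switches (n + 1) c = switches n c + (if c n ≠ c (n + 1) then 1 else 0) := by
  unfold switches
  rw [show Finset.Ico 1 (n + 1) = insert n (Finset.Ico 1 n) by
    ext x; simp only [Finset.mem_Ico, Finset.mem_insert]; omega, Finset.filter_insert]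
  split
  · rw [Finset.card_insert_of_notMem (by simp)]
  · rfl

lemma csFacet_congr {n : ℕ} {c c' : ℕ → Bool} (h : ∀ t, 1 ≤ t → t ≤ n → c t = c' t) :
    csFacet n c = csFacet n c' := by
  unfold csFacet
  apply Finset.image_congr
  intro t ht
  simp only [Finset.coe_range, Set.mem_Iio] at ht
  show ((t + 1 : ℕ), c (t + 1)) = ((t + 1 : ℕ), c' (t + 1))
  rw [h (t + 1) (by omega) (by omega)]

lemma csFacet_subset_succ {n : ℕ} (c : ℕ → Bool) : csFacet n c ⊆ csFacet (n + 1) c := by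
  rintro ⟨a, b⟩ hab
  rw [mem_csFacet] at hab ⊢
  exact ⟨hab.1, by omega, hab.2.2⟩

/-- Let `d ≥ 2` and `1 ≤ i ≤ d-1`. Then, as subcomplexes of
`∂C_{d+1}^*`, `lk(x_{d+1}, B(i,d+1)) = st(x_d, B(i,d)) ∪ st(y_d, B(i-1,d))`, where
`B(i,d)` and `B(i-1,d)` are regarded as subcomplexes of `∂C_{d+1}^*` supported on the
vertices `x_1,…,x_d,y_1,…,y_d`. -/
theorem statement17 (d i : ℕ) (hd : 2 ≤ d) (hi1 : 1 ≤ i) (hi2 : i ≤ d - 1) :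
    linkC ((d + 1 : ℕ), false) (BSw i (d + 1)) =
      starC ((d : ℕ), false) (BSw i d) ∪ starC ((d : ℕ), true) (BSw (i - 1) d) := by
  ext σ
  constructor
  · rintro ⟨-, hx, c, hc, hsub⟩
    have hmem : ((d + 1 : ℕ), false) ∈ csFacet (d + 1) c :=
      hsub (Finset.mem_union_right _ (Finset.mem_singleton_self _))
    have hcd1 : c (d + 1) = false := ((mem_csFacet.mp hmem).2.2).symm
    have hσsub : σ ⊆ csFacet d c := by
      rintro ⟨a, b⟩ ha
      have h1 := mem_csFacet.mp (hsub (Finset.mem_union_left _ ha))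
      rw [mem_csFacet]
      refine ⟨h1.1, ?_, h1.2.2⟩
      by_contra hgt
      have : a = d + 1 := by omega
      subst this
      rw [hcd1] at h1
      exact hx (h1.2.2 ▸ ha)
    have hsw := switches_succ (by omega : 1 ≤ d) c
    by_cases hcd : c d = false
    · left
      have hf : ((d : ℕ), false) ∈ csFacet d c := mem_csFacet.mpr ⟨by omega, le_refl d, hcd.symm⟩
      have hsub' : σ ∪ {((d : ℕ), false)} ⊆ csFacet d c := by
        intro v hv
        rcases Finset.mem_union.mp hv with h | h
        · exact hσsub h
        · rw [Finset.mem_singleton.mp h]; exact hf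
      have hswd : switches d c ≤ i := by
        rw [hsw] at hc; omega
      exact ⟨⟨c, hswd, hσsub⟩, ⟨c, hswd, hsub'⟩⟩
    · right
      have hcd' : c d = true := by
        cases h : c d
        · exact absurd h hcd
        · rfl
      have hf : ((d : ℕ), true) ∈ csFacet d c := mem_csFacet.mpr ⟨by omega, le_refl d, hcd'.symm⟩
      have hsub' : σ ∪ {((d : ℕ), true)} ⊆ csFacet d c := by
        intro v hv
        rcases Finset.mem_union.mp hv with h | h
        · exact hσsub h
        · rw [Finset.mem_singleton.mp h]; exact hf
      have hne : c d ≠ c (d + 1) := by rw [hcd', hcd1]; simp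
      have hswd : switches d c ≤ i - 1 := by
        rw [hsw, if_pos hne] at hc; omega
      exact ⟨⟨c, hswd, hσsub⟩, ⟨c, hswd, hsub'⟩⟩
  · rintro (⟨-, c, hc, hsub⟩ | ⟨-, c, hc, hsub⟩) <;>
    · set c' : ℕ → Bool := Function.update c (d + 1) false with hc'def
      have hagree : ∀ t, 1 ≤ t → t ≤ d → c t = c' t := by
        intro t h1 h2
        rw [hc'def, Function.update_of_ne (by omega)]
      have hc'd1 : c' (d + 1) = false := Function.update_self _ _ _
      have hfacet : csFacet d c = csFacet d c' := csFacet_congr hagree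
      have hcd : ((d : ℕ), _) ∈ csFacet d c :=
        hsub (Finset.mem_union_right _ (Finset.mem_singleton_self _))
      have hcdval := (mem_csFacet.mp hcd).2.2
      have hσsub : σ ⊆ csFacet (d + 1) c' := fun v hv =>
        csFacet_subset_succ c' (hfacet ▸ hsub (Finset.mem_union_left _ hv))
      have hnotmem : ((d + 1 : ℕ), false) ∉ σ := by
        intro hmem
        have := (mem_csFacet.mp (hsub (Finset.mem_union_left _ hmem))).2.1
        omega
      have hsubup : σ ∪ {((d + 1 : ℕ), false)} ⊆ csFacet (d + 1) c' := by
        intro v hv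
        rcases Finset.mem_union.mp hv with h | h
        · exact hσsub h
        · rw [Finset.mem_singleton.mp h]
          exact mem_csFacet.mpr ⟨by omega, le_refl _, hc'd1.symm⟩
      have hsw : switches (d + 1) c' =
          switches d c + (if c' d ≠ c' (d + 1) then 1 else 0) := by
        rw [switches_succ (by omega : 1 ≤ d) c', switches_congr hagree]
      have hc'd : c' d = c d := (hagree d (by omega) (le_refl d)).symm
      have hswle : switches (d + 1) c' ≤ i := by
        rw [hsw, hc'd, hc'd1, ← hcdval]
        simp only [ne_eq]
        split
        all_goals first
        | omega
        | (exfalso; simp_all)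
      exact ⟨⟨c', hswle, hσsub⟩, hnotmem, ⟨c', hswle, hsubup⟩⟩

end SpherePaper
end
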